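/- arXiv:1701.03721 — 6 statements merged into one kernel-verified Lean document; each statement's English description precedes it below -/
import Mathlib

section
/- For all positive integers n and p, the sum over j from 1 to n of s(j,p)/j! equals s(n+1,p+1)/n!, where s(n,k) denotes the unsigned Stirling numbers of the first kind. -/
open Finset

def stirling1 : ℕ → ℕ → ℕ
  | 0, 0 => 1
  | 0, _ + 1 => 0
  | _ + 1, 0 => 0
  | n + 1, k + 1 => n * stirling1 n (k + 1) + stirling1 n k

noncomputable def H (n : ℕ) : ℝ := ∑ j ∈ Icc 1 n, (1 : ℝ) / j

noncomputable def zp (k n : ℕ) : ℝ := ∑ j ∈ Icc 1 n, (1 : ℝ) / (j : ℝ) ^ k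

noncomputable def hzeta (s : ℕ) (a : ℝ) : ℝ := ∑' n : ℕ, 1 / ((n + 1 : ℝ) + a) ^ s

noncomputable def Z (s : ℕ) : ℝ := ∑' n : ℕ, 1 / ((n + 1 : ℝ)) ^ s

theorem stmt0 (n p : ℕ) (hn : 1 ≤ n) (hp : 1 ≤ p) :
    ∑ j ∈ Icc 1 n, (stirling1 j p : ℝ) / (Nat.factorial j) =
      (stirling1 (n + 1) (p + 1) : ℝ) / (Nat.factorial n) := by
  induction n, hn using Nat.le_induction with
  | base =>
    obtain ⟨q, rfl⟩ := Nat.exists_eq_add_of_le hp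
    simp [stirling1, Nat.add_comm 1 q]
  | succ n hn ih =>
    rw [Finset.sum_Icc_succ_top (by omega : 1 ≤ n + 1), ih]
    have h1 : (Nat.factorial (n+1) : ℝ) = (n+1) * Nat.factorial n := by
      push_cast [Nat.factorial_succ]; ring
    have h2 : stirling1 (n + 2) (p + 1) = (n+1) * stirling1 (n+1) (p+1) + stirling1 (n+1) p := rfl
    have hfn : (Nat.factorial n : ℝ) ≠ 0 := by positivity
    rw [h2, h1]
    push_cast
    field_simp
end

section
/- For all integers n ≥ 1 and p ≥ 2, the sum over j from 1 to n−1 of H_j·s(n−j,p−1)/(n−j)! equals p·s(n+1,p+1)/n!, where H_j is the j-th harmonic number and s(n,k) denotes the unsigned Stirling numbers of the first kind. -/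
open Finset

lemma stirling1_succ (n k : ℕ) :
    stirling1 (n + 1) (k + 1) = n * stirling1 n (k + 1) + stirling1 n k := rfl

lemma stirling1_zero_right (n : ℕ) : stirling1 (n + 1) 0 = 0 := rfl

lemma stirling1_zero_left (k : ℕ) : stirling1 0 (k + 1) = 0 := rfl

lemma stirling1_one (n : ℕ) : stirling1 (n + 1) 1 = n.factorial := by
  induction n with
  | zero => rfl
  | succ m ih =>
    rw [stirling1_succ, ih, stirling1_zero_right, Nat.factorial_succ]
    ring

lemma choose_sum_split (n : ℕ) (F : ℕ → ℕ) :
    ∑ j ∈ range (n + 2), (n + 1).choose j * F j =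
      ∑ j ∈ range (n + 1), n.choose j * F j + ∑ j ∈ range (n + 1), n.choose j * F (j + 1) := by
  rw [Finset.sum_range_succ' (fun j => (n + 1).choose j * F j) (n + 1)]
  simp only [Nat.choose_succ_succ, add_mul, Nat.choose_zero_right, one_mul]
  rw [Finset.sum_add_distrib]
  have h : ∑ j ∈ range (n + 1), n.choose (j + 1) * F (j + 1)
      = ∑ j ∈ range n, n.choose (j + 1) * F (j + 1) := by
    rw [Finset.sum_range_succ]; simp
  rw [h, Finset.sum_range_succ' (fun j => n.choose j * F j) n]
  simp only [Nat.choose_zero_right, one_mul]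
  omega

lemma conv (n : ℕ) : ∀ a b : ℕ,
    ∑ j ∈ range (n + 1), n.choose j * stirling1 j a * stirling1 (n - j) b =
      (a + b).choose a * stirling1 n (a + b) := by
  induction n with
  | zero =>
    intro a b
    match a, b with
    | 0, 0 => simp [stirling1]
    | 0, b + 1 => simp [stirling1]
    | a + 1, b => simp [stirling1, Nat.add_right_comm a 1 b]
  | succ n ih =>
    intro a b
    match a, b with
    | 0, b =>
      rw [Finset.sum_eq_single 0 (fun j _ hj => by
        obtain ⟨j', rfl⟩ := Nat.exists_eq_succ_of_ne_zero hj
        simp [stirling1]) (by simp)]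
      simp [stirling1]
    | a + 1, 0 =>
      rw [Finset.sum_eq_single (n + 1) (fun j hj hj' => by
        have hjn : j ≤ n := by
          have := mem_range.mp hj; omega
        rw [show n + 1 - j = (n - j) + 1 from by omega, stirling1_zero_right, mul_zero]) (by simp)]
      simp [stirling1]
    | a + 1, b + 1 =>
      have e1 : ∀ j ∈ range (n + 1),
          n.choose j * (stirling1 j (a + 1) * stirling1 (n + 1 - j) (b + 1))
          = (n - j) * (n.choose j * stirling1 j (a + 1) * stirling1 (n - j) (b + 1))
            + n.choose j * stirling1 j (a + 1) * stirling1 (n - j) b := by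
        intro j hj
        have hjn : j ≤ n := by have := mem_range.mp hj; omega
        rw [show n + 1 - j = (n - j) + 1 from by omega, stirling1_succ]
        ring
      have e2 : ∀ j ∈ range (n + 1),
          n.choose j * (stirling1 (j + 1) (a + 1) * stirling1 (n - j) (b + 1))
          = j * (n.choose j * stirling1 j (a + 1) * stirling1 (n - j) (b + 1))
            + n.choose j * stirling1 j a * stirling1 (n - j) (b + 1) := by
        intro j hj; rw [stirling1_succ]; ring
      calc ∑ j ∈ range (n + 1 + 1), (n + 1).choose j * stirling1 j (a + 1) * stirling1 (n + 1 - j) (b + 1)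
          = ∑ j ∈ range (n + 2), (n + 1).choose j *
              (stirling1 j (a + 1) * stirling1 (n + 1 - j) (b + 1)) := by
            simp [mul_assoc]
        _ = ∑ j ∈ range (n + 1), n.choose j * (stirling1 j (a + 1) * stirling1 (n + 1 - j) (b + 1))
            + ∑ j ∈ range (n + 1), n.choose j * (stirling1 (j + 1) (a + 1) * stirling1 (n - j) (b + 1)) := by
            rw [choose_sum_split n (fun j => stirling1 j (a + 1) * stirling1 (n + 1 - j) (b + 1))]
            congr 1
            refine Finset.sum_congr rfl fun j hj => ?_
            have hjn : j ≤ n := by have := mem_range.mp hj; omega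
            rw [show n + 1 - (j + 1) = n - j from by omega]
        _ = (∑ j ∈ range (n + 1), (n - j) * (n.choose j * stirling1 j (a + 1) * stirling1 (n - j) (b + 1))
              + ∑ j ∈ range (n + 1), n.choose j * stirling1 j (a + 1) * stirling1 (n - j) b)
            + (∑ j ∈ range (n + 1), j * (n.choose j * stirling1 j (a + 1) * stirling1 (n - j) (b + 1))
              + ∑ j ∈ range (n + 1), n.choose j * stirling1 j a * stirling1 (n - j) (b + 1)) := by
            rw [Finset.sum_congr rfl e1, Finset.sum_congr rfl e2,
              Finset.sum_add_distrib, Finset.sum_add_distrib]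
        _ = n * ∑ j ∈ range (n + 1), n.choose j * stirling1 j (a + 1) * stirling1 (n - j) (b + 1)
            + ∑ j ∈ range (n + 1), n.choose j * stirling1 j (a + 1) * stirling1 (n - j) b
            + ∑ j ∈ range (n + 1), n.choose j * stirling1 j a * stirling1 (n - j) (b + 1) := by
            rw [Finset.mul_sum]
            have : ∀ j ∈ range (n + 1),
                (n - j) * (n.choose j * stirling1 j (a + 1) * stirling1 (n - j) (b + 1))
                + j * (n.choose j * stirling1 j (a + 1) * stirling1 (n - j) (b + 1))
                = n * (n.choose j * stirling1 j (a + 1) * stirling1 (n - j) (b + 1)) := by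
              intro j hj
              have hjn : j ≤ n := by have := mem_range.mp hj; omega
              rw [← add_mul]
              congr 1
              omega
            rw [← Finset.sum_congr rfl this, Finset.sum_add_distrib]
            ring
        _ = (a + 1 + (b + 1)).choose (a + 1) * stirling1 (n + 1) (a + 1 + (b + 1)) := by
            rw [ih (a + 1) (b + 1), ih (a + 1) b, ih a (b + 1),
              show a + 1 + (b + 1) = (a + b + 1) + 1 from by omega,
              show a + 1 + b = a + b + 1 from by omega,
              show a + (b + 1) = a + b + 1 from by omega,
              stirling1_succ, Nat.choose_succ_succ]
            ring

lemma keyU (b : ℕ) : ∀ n : ℕ, ∑ j ∈ range (n + 1), n.choose j * stirling1 (j + 1) 2 * stirling1 (n - j) b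
    = (b + 1) * stirling1 (n + 1) (b + 2) := by
  intro n
  induction n with
  | zero => simp [stirling1]
  | succ n ih =>
    calc ∑ j ∈ range (n + 1 + 1), (n + 1).choose j * stirling1 (j + 1) 2 * stirling1 (n + 1 - j) b
        = ∑ j ∈ range (n + 2), (j * ((n + 1).choose j * stirling1 j 2 * stirling1 (n + 1 - j) b)
            + (n + 1).choose j * stirling1 j 1 * stirling1 (n + 1 - j) b) := by
          refine Finset.sum_congr rfl fun j _ => ?_
          rw [stirling1_succ]; ring
      _ = ∑ j ∈ range (n + 2), j * ((n + 1).choose j * stirling1 j 2 * stirling1 (n + 1 - j) b)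
          + (1 + b).choose 1 * stirling1 (n + 1) (1 + b) := by
          rw [Finset.sum_add_distrib, conv (n + 1) 1 b]
      _ = (n + 1) * ∑ i ∈ range (n + 1), n.choose i * stirling1 (i + 1) 2 * stirling1 (n - i) b
          + (b + 1) * stirling1 (n + 1) (b + 1) := by
          congr 1
          · rw [Finset.sum_range_succ' (fun j => j * ((n + 1).choose j * stirling1 j 2 * stirling1 (n + 1 - j) b)) (n + 1)]
            simp only [zero_mul, add_zero, Finset.mul_sum]
            refine Finset.sum_congr rfl fun i hi => ?_
            have h1 : (i + 1) * (n + 1).choose (i + 1) = (n + 1) * n.choose i := by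
              rw [mul_comm ((i:ℕ) + 1), ← Nat.add_one_mul_choose_eq]
            have h2 : n + 1 - (i + 1) = n - i := by omega
            rw [h2, ← mul_assoc, ← mul_assoc, ← mul_assoc, h1]
            ring
          · rw [Nat.choose_one_right, add_comm 1 b]
      _ = (b + 1) * stirling1 (n + 1 + 1) (b + 2) := by
          rw [ih, show stirling1 (n + 1 + 1) (b + 2)
              = (n + 1) * stirling1 (n + 1) (b + 2) + stirling1 (n + 1) (b + 1)
            from stirling1_succ (n + 1) (b + 1)]
          ring

lemma H_eq (n : ℕ) : H n = (stirling1 (n + 1) 2 : ℝ) / n.factorial := by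
  induction n with
  | zero => simp [H, stirling1]
  | succ n ih =>
    have hfac : (n.factorial : ℝ) ≠ 0 := Nat.cast_ne_zero.mpr n.factorial_ne_zero
    have hfac1 : ((n + 1).factorial : ℝ) ≠ 0 := Nat.cast_ne_zero.mpr (n + 1).factorial_ne_zero
    have : H (n + 1) = H n + 1 / (n + 1 : ℝ) := by
      unfold H
      rw [Finset.sum_Icc_succ_top (by omega)]
      push_cast
      ring
    have hs : (stirling1 (n + 1 + 1) 2 : ℝ) = (n + 1) * stirling1 (n + 1) 2 + n.factorial := by
      rw [stirling1_succ (n + 1) 1, stirling1_one]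
      push_cast
      ring
    rw [this, ih, hs, Nat.factorial_succ]
    push_cast
    field_simp

theorem stmt1 (n p : ℕ) (hn : 1 ≤ n) (hp : 2 ≤ p) :
    ∑ j ∈ Icc 1 (n - 1), H j * (stirling1 (n - j) (p - 1) : ℝ) / (Nat.factorial (n - j)) =
      (p : ℝ) * (stirling1 (n + 1) (p + 1) : ℝ) / (Nat.factorial n) := by
  obtain ⟨q, rfl⟩ : ∃ q, p = q + 2 := ⟨p - 2, by omega⟩
  have hfn : (n.factorial : ℝ) ≠ 0 := Nat.cast_ne_zero.mpr n.factorial_ne_zero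
  have step1 : ∑ j ∈ Icc 1 (n - 1), H j * (stirling1 (n - j) (q + 2 - 1) : ℝ) / ((n - j).factorial)
      = (↑(∑ j ∈ Icc 1 (n - 1), n.choose j * stirling1 (j + 1) 2 * stirling1 (n - j) (q + 1)) : ℝ)
        / n.factorial := by
    push_cast
    rw [Finset.sum_div]
    refine Finset.sum_congr rfl fun j hj => ?_
    have hj' := Finset.mem_Icc.mp hj
    have hjn : j ≤ n := by omega
    have hch : (n.choose j * j.factorial * (n - j).factorial : ℕ) = n.factorial :=
      Nat.choose_mul_factorial_mul_factorial hjn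
    have hch' : (n.factorial : ℝ) = n.choose j * j.factorial * (n - j).factorial := by
      exact_mod_cast hch.symm
    have hfj : (j.factorial : ℝ) ≠ 0 := Nat.cast_ne_zero.mpr j.factorial_ne_zero
    have hfnj : ((n - j).factorial : ℝ) ≠ 0 := Nat.cast_ne_zero.mpr (n - j).factorial_ne_zero
    rw [H_eq]
    field_simp
    rw [hch']
    ring
  have step2 : ∑ j ∈ Icc 1 (n - 1), n.choose j * stirling1 (j + 1) 2 * stirling1 (n - j) (q + 1)
      = ∑ j ∈ range (n + 1), n.choose j * stirling1 (j + 1) 2 * stirling1 (n - j) (q + 1) := by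
    refine Finset.sum_subset (fun j hj => ?_) (fun j hj hj' => ?_)
    · simp only [mem_Icc] at hj
      simp only [mem_range]
      omega
    · simp only [mem_range] at hj
      simp only [mem_Icc, not_and_or, not_le] at hj'
      have : j = 0 ∨ j = n := by omega
      rcases this with rfl | rfl
      · simp [stirling1]
      · simp [stirling1]
  rw [step1, step2, keyU]
  push_cast
  ring_nf
end

section
/- For every positive integer n, the sum over j from 1 to n−1 of H_j/(n−j) equals H_n² − ζ_n(2), where ζ_n(2) = ∑_{j=1}^n 1/j². -/
open Finset

lemma H_succ (n : ℕ) : H (n + 1) = H n + 1 / ((n : ℝ) + 1) := by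
  unfold H
  rw [Finset.sum_Icc_succ_top (by omega)]
  push_cast
  ring

lemma zp_succ (n : ℕ) : zp 2 (n + 1) = zp 2 n + 1 / ((n : ℝ) + 1) ^ 2 := by
  unfold zp
  rw [Finset.sum_Icc_succ_top (by omega)]
  push_cast
  ring

lemma reflect (f : ℕ → ℝ) (n : ℕ) :
    ∑ i ∈ Icc 1 n, f (n + 1 - i) = ∑ i ∈ Icc 1 n, f i := by
  exact Finset.sum_nbij' (i := fun a => n + 1 - a) (j := fun a => n + 1 - a)
    (fun a ha => by simp only [mem_Icc] at *; omega)
    (fun a ha => by simp only [mem_Icc] at *; omega)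
    (fun a ha => by simp only [mem_Icc] at ha; show n + 1 - (n + 1 - a) = a; omega)
    (fun a ha => by simp only [mem_Icc] at ha; show n + 1 - (n + 1 - a) = a; omega)
    (fun a ha => rfl)

lemma key (n : ℕ) :
    ∑ i ∈ Icc 1 n, (1 : ℝ) / i * (1 / ((n + 1 - i : ℕ) : ℝ)) = 2 * H n / ((n : ℝ) + 1) := by
  have step : ∀ i ∈ Icc 1 n, (1 : ℝ) / i * (1 / ((n + 1 - i : ℕ) : ℝ)) =
      1 / ((n : ℝ) + 1) * (1 / i + 1 / ((n + 1 - i : ℕ) : ℝ)) := by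
    intro i hi
    simp only [mem_Icc] at hi
    have h1 : ((n + 1 - i : ℕ) : ℝ) = (n : ℝ) + 1 - i := by
      have : (i : ℝ) ≤ (n : ℝ) + 1 := by exact_mod_cast by omega
      push_cast [Nat.cast_sub (by omega : i ≤ n + 1)]
      ring
    have hi0 : (i : ℝ) ≠ 0 := by exact_mod_cast by omega
    have hni : ((n + 1 - i : ℕ) : ℝ) ≠ 0 := by
      have : (0 : ℕ) < n + 1 - i := by omega
      exact_mod_cast this.ne'
    rw [h1] at hni ⊢
    field_simp
    try ring
  rw [Finset.sum_congr rfl step, ← Finset.mul_sum, Finset.sum_add_distrib]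
  have hr := reflect (fun i => 1 / (i : ℝ)) n
  rw [hr]
  unfold H
  ring

lemma main_lemma (n : ℕ) :
    ∑ i ∈ Icc 1 n, (1 : ℝ) / i * H (n - i) = H n ^ 2 - zp 2 n := by
  induction n with
  | zero => simp [H, zp]
  | succ n ih =>
    rw [Finset.sum_Icc_succ_top (by omega)]
    have hH0 : H (n + 1 - (n + 1)) = 0 := by simp [H]
    rw [hH0, mul_zero, add_zero]
    have step : ∀ i ∈ Icc 1 n, (1 : ℝ) / i * H (n + 1 - i) =
        (1 : ℝ) / i * H (n - i) + (1 : ℝ) / i * (1 / ((n + 1 - i : ℕ) : ℝ)) := by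
      intro i hi
      simp only [mem_Icc] at hi
      have h1 : n + 1 - i = (n - i) + 1 := by omega
      rw [h1, H_succ]
      push_cast
      ring
    rw [Finset.sum_congr rfl step, Finset.sum_add_distrib, ih, key, H_succ, zp_succ]
    have hne : ((n : ℝ) + 1) ≠ 0 := by positivity
    field_simp
    ring

theorem stmt2 (n : ℕ) (hn : 1 ≤ n) :
    ∑ j ∈ Icc 1 (n - 1), H j / ((n : ℝ) - j) = (H n) ^ 2 - zp 2 n := by
  obtain ⟨m, rfl⟩ : ∃ m, n = m + 1 := ⟨n - 1, by omega⟩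
  simp only [Nat.add_sub_cancel]
  have hrefl := reflect (fun j => H j / (((m : ℝ) + 1) - j)) m
  have cast1 : ∀ j ∈ Icc 1 m,
      H (m + 1 - j) / (((m : ℝ) + 1) - ((m + 1 - j : ℕ) : ℝ)) =
      (1 : ℝ) / j * H (m + 1 - j) := by
    intro j hj
    simp only [mem_Icc] at hj
    have h1 : ((m + 1 - j : ℕ) : ℝ) = (m : ℝ) + 1 - j := by
      push_cast [Nat.cast_sub (by omega : j ≤ m + 1)]
      ring
    rw [h1]
    have hj0 : (j : ℝ) ≠ 0 := by exact_mod_cast by omega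
    field_simp
    try ring
    rw [mul_assoc, mul_inv_cancel₀ hj0, mul_one]
  calc ∑ j ∈ Icc 1 m, H j / ((↑(m + 1) : ℝ) - j)
      = ∑ j ∈ Icc 1 m, H j / (((m : ℝ) + 1) - j) := by
        refine Finset.sum_congr rfl fun j _ => ?_
        push_cast
        ring
    _ = ∑ j ∈ Icc 1 m, H (m + 1 - j) / (((m : ℝ) + 1) - ((m + 1 - j : ℕ) : ℝ)) := hrefl.symm
    _ = ∑ j ∈ Icc 1 m, (1 : ℝ) / j * H (m + 1 - j) := Finset.sum_congr rfl cast1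
    _ = ∑ j ∈ Icc 1 (m + 1), (1 : ℝ) / j * H (m + 1 - j) := by
        rw [Finset.sum_Icc_succ_top (by omega)]
        simp [H]
    _ = H (m + 1) ^ 2 - zp 2 (m + 1) := main_lemma (m + 1)
end

section
/- For n ≥ 1, the unsigned Stirling number of the first kind satisfies s(n,4) = ((n−1)!/6)·(H_{n−1}³ − 3·H_{n−1}·ζ_{n−1}(2) + 2·ζ_{n−1}(3)), where ζ_{n−1}(k) = ∑_{j=1}^{n−1} 1/j^k and H_{n−1} = ζ_{n−1}(1). -/
open Finset

lemma Hsucc (m : ℕ) : H (m + 1) = H m + 1 / ((m : ℝ) + 1) := by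
  unfold H
  rw [Finset.sum_Icc_succ_top (by omega)]
  push_cast
  ring

lemma zpsucc (k m : ℕ) : zp k (m + 1) = zp k m + 1 / ((m : ℝ) + 1) ^ k := by
  unfold zp
  rw [Finset.sum_Icc_succ_top (by omega)]
  push_cast
  ring

lemma s1 (m : ℕ) : stirling1 (m + 1) 1 = Nat.factorial m := by
  induction m with
  | zero => rfl
  | succ m ih =>
    have h1 : stirling1 (m + 2) 1 = (m + 1) * stirling1 (m + 1) 1 + stirling1 (m + 1) 0 := rfl
    have h0 : stirling1 (m + 1) 0 = 0 := rfl
    rw [h1, h0, ih, Nat.factorial_succ]; omega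

lemma s2 (m : ℕ) : (stirling1 (m + 1) 2 : ℝ) = (Nat.factorial m : ℝ) * H m := by
  induction m with
  | zero => simp [stirling1, H]
  | succ m ih =>
    have h1 : stirling1 (m + 2) 2 = (m + 1) * stirling1 (m + 1) 2 + stirling1 (m + 1) 1 := rfl
    have hne : (m : ℝ) + 1 ≠ 0 := by positivity
    rw [h1]
    push_cast [s1, Hsucc, ih, Nat.factorial_succ]
    field_simp

lemma s3 (m : ℕ) : (stirling1 (m + 1) 3 : ℝ) =
    (Nat.factorial m : ℝ) / 2 * ((H m) ^ 2 - zp 2 m) := by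
  induction m with
  | zero => simp [stirling1, H, zp]
  | succ m ih =>
    have h1 : stirling1 (m + 2) 3 = (m + 1) * stirling1 (m + 1) 3 + stirling1 (m + 1) 2 := rfl
    have hne : (m : ℝ) + 1 ≠ 0 := by positivity
    rw [h1]
    push_cast [s2, Hsucc, zpsucc, ih, Nat.factorial_succ]
    field_simp
    ring

lemma s4 (m : ℕ) : (stirling1 (m + 1) 4 : ℝ) =
    (Nat.factorial m : ℝ) / 6 * ((H m) ^ 3 - 3 * H m * zp 2 m + 2 * zp 3 m) := by
  induction m with
  | zero => simp [stirling1, H, zp]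
  | succ m ih =>
    have h1 : stirling1 (m + 2) 4 = (m + 1) * stirling1 (m + 1) 4 + stirling1 (m + 1) 3 := rfl
    have hne : (m : ℝ) + 1 ≠ 0 := by positivity
    rw [h1]
    push_cast [s3, Hsucc, zpsucc, ih, Nat.factorial_succ]
    field_simp
    ring

theorem stmt6 (n : ℕ) (hn : 1 ≤ n) :
    (stirling1 n 4 : ℝ) =
      (Nat.factorial (n - 1) : ℝ) / 6 *
        ((H (n - 1)) ^ 3 - 3 * H (n - 1) * zp 2 (n - 1) + 2 * zp 3 (n - 1)) := by
  obtain ⟨m, rfl⟩ : ∃ m, n = m + 1 := ⟨n - 1, by omega⟩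
  simpa using s4 m
end

section
/- For every real number a which is not an integer, (5/2)·∑_{n=1}^∞ 1/(n² − a²)² − (∑_{n=1}^∞ 1/(n² − a²))² = 2a²·((∑_{n=1}^∞ 1/(n² − a²))·(∑_{n=1}^∞ 1/(n² − a²)²) − ∑_{n=1}^∞ 1/(n² − a²)³). -/
open Finset

section Aux18
open Filter


private lemma aux18_sq_sum : Summable (fun n : ℕ => 1/((n:ℝ)+1)^2) := by
  have h := Real.summable_one_div_nat_pow.mpr (by norm_num : 1 < 2)
  refine ((summable_nat_add_iff 1).mpr h).congr ?_
  intro n; push_cast; ring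

private lemma aux18_summable_of_bound (c : ℕ → ℝ) (K : ℝ)
    (h : ∀ n, |c n| ≤ K/((n:ℝ)+1)^2) : Summable c := by
  refine Summable.of_norm_bounded (g := fun n => K/((n:ℝ)+1)^2)
    ((aux18_sq_sum.mul_left K).congr (fun n => by rw [mul_one_div])) ?_
  intro n; rw [Real.norm_eq_abs]; exact h n

private lemma aux18_bound (r : ℝ) : ∃ K : ℝ, 2 ≤ K ∧
    ∀ n : ℕ, |1/(((n:ℝ)+1)^2 - r)| ≤ K/((n:ℝ)+1)^2 := by
  set N₀ := Nat.ceil (2*|r|) with hN₀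
  have hsum : (0:ℝ) ≤ ∑ j ∈ range N₀, ((j:ℝ)+1)^2 * |1/(((j:ℝ)+1)^2 - r)| :=
    Finset.sum_nonneg fun j _ => mul_nonneg (by positivity) (abs_nonneg _)
  refine ⟨2 + ∑ j ∈ range N₀, ((j:ℝ)+1)^2 * |1/(((j:ℝ)+1)^2 - r)|, by linarith, ?_⟩
  intro n
  have hpos : (0:ℝ) < ((n:ℝ)+1)^2 := by positivity
  rw [le_div_iff₀ hpos]
  rcases lt_or_ge n N₀ with hn | hn
  · have hterm : ((n:ℝ)+1)^2 * |1/(((n:ℝ)+1)^2 - r)| ≤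
        ∑ j ∈ range N₀, ((j:ℝ)+1)^2 * |1/(((j:ℝ)+1)^2 - r)| :=
      Finset.single_le_sum (f := fun j : ℕ => ((j:ℝ)+1)^2 * |1/(((j:ℝ)+1)^2 - r)|)
        (fun j _ => mul_nonneg (by positivity) (abs_nonneg _)) (Finset.mem_range.mpr hn)
    nlinarith [abs_nonneg (1/(((n:ℝ)+1)^2 - r))]
  · have h1 : 2*|r| ≤ (n:ℝ) := le_trans (Nat.le_ceil _) (by exact_mod_cast hn)
    have h2 : r ≤ ((n:ℝ)+1)^2/2 := by
      have : |r| ≤ ((n:ℝ)+1)^2/2 := by nlinarith [abs_nonneg r]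
      linarith [le_abs_self r]
    have hb : ((n:ℝ)+1)^2/2 ≤ ((n:ℝ)+1)^2 - r := by linarith
    have hbpos : 0 < ((n:ℝ)+1)^2 - r := by linarith
    rw [abs_of_nonneg (by positivity : (0:ℝ) ≤ 1/(((n:ℝ)+1)^2 - r))]
    have key : 1/(((n:ℝ)+1)^2 - r) * ((n:ℝ)+1)^2 ≤ 2 := by
      rw [div_mul_eq_mul_div, div_le_iff₀ hbpos]; linarith
    linarith


private lemma aux18_ts (c : ℕ) : Summable
    (fun n : ℕ => if n = c then 0 else 1/(((n:ℝ)+1)^2 - ((c:ℝ)+1)^2)) := by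
  obtain ⟨K, hK2, hKb⟩ := aux18_bound (((c:ℝ)+1)^2)
  refine aux18_summable_of_bound _ K (fun n => ?_)
  by_cases hn : n = c
  · rw [if_pos hn, abs_zero]
    exact div_nonneg (by linarith) (by positivity)
  · rw [if_neg hn]; exact hKb n

private lemma aux18_A (c : ℕ) :
    ∑' n : ℕ, (if n = c then 0 else 1/(((n:ℝ)+1)^2 - ((c:ℝ)+1)^2))
      = 3/(4*((c:ℝ)+1)^2) := by
  set M : ℝ := (c:ℝ)+1 with hM
  have hMpos : 0 < M := by positivity
  set t : ℕ → ℝ := fun n => if n = c then 0 else 1/(((n:ℝ)+1)^2 - M^2) with ht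
  have hts : Summable t := by
    rw [ht]; simp only [hM]; exact aux18_ts c
  have halg : ∀ x y : ℝ, x ≠ 0 → y ≠ 0 → y - x = 2*M → 1/(x*y) = 1/(2*M)*(1/x - 1/y) := by
    intro x y hx hy hxy
    have hyx : y - x ≠ 0 := by rw [hxy]; positivity
    rw [← hxy]
    field_simp
  have hterm : ∀ n : ℕ, n ≠ c →
      t n = 1/(2*M) * (1/((n:ℝ)+1-M) - 1/((n:ℝ)+1+M)) := by
    intro n hn
    have h1 : ((n:ℝ)+1) - M ≠ 0 := by
      rw [hM]
      intro h
      exact hn (by exact_mod_cast (by linarith : (n:ℝ) = c))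
    have h2 : ((n:ℝ)+1) + M ≠ 0 := by positivity
    have hd : ((n:ℝ)+1)^2 - M^2 = (((n:ℝ)+1)-M)*(((n:ℝ)+1)+M) := by ring
    simp only [ht, if_neg hn]
    rw [hd]
    exact halg _ _ h1 h2 (by ring)
  have key : ∀ k : ℕ, ∑ n ∈ range (c+1+k), t n
      = 1/(2*M) * (3/(2*M) - ∑ i ∈ range (2*c+2), 1/((i:ℝ)+(k:ℝ)+1)) := by
    intro k
    induction k with
    | zero =>
      have hsplit : ∑ n ∈ range (c+1+0), t n = ∑ n ∈ range c, t n := by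
        simp [Finset.sum_range_succ, ht]
      rw [hsplit]
      have hA : ∑ n ∈ range c, t n
          = 1/(2*M) * ((∑ n ∈ range c, 1/((n:ℝ)+1-M)) - ∑ n ∈ range c, 1/((n:ℝ)+1+M)) := by
        rw [← Finset.sum_sub_distrib, Finset.mul_sum]
        refine Finset.sum_congr rfl fun n hn => ?_
        exact hterm n (by have := Finset.mem_range.mp hn; omega)
      rw [hA]
      have hrefl : ∑ n ∈ range c, 1/((n:ℝ)+1-M) = ∑ n ∈ range c, -(1/((n:ℝ)+1)) := by
        rw [← Finset.sum_range_reflect (fun j => 1/((j:ℝ)+1-M)) c]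
        refine Finset.sum_congr rfl fun j hj => ?_
        have hj' := Finset.mem_range.mp hj
        have hcast : ((c - 1 - j : ℕ) : ℝ) = (c:ℝ) - 1 - j := by
          have h' : c - 1 - j = c - (1 + j) := by omega
          rw [h', Nat.cast_sub (by omega)]
          push_cast; ring
        rw [hcast, hM, show (c:ℝ) - 1 - (j:ℝ) + 1 - ((c:ℝ)+1) = -((j:ℝ)+1) by ring,
          one_div, one_div, inv_neg]
      rw [hrefl, Finset.sum_neg_distrib]
      have hQ : ∑ i ∈ range (2*c+2), 1/((i:ℝ)+((0:ℕ):ℝ)+1)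
          = (∑ n ∈ range c, 1/((n:ℝ)+1)) + 1/M
            + ((∑ n ∈ range c, 1/((n:ℝ)+1+M)) + 1/(2*M)) := by
        rw [show 2*c+2 = (c+1)+(c+1) by ring, Finset.sum_range_add,
          Finset.sum_range_succ, Finset.sum_range_succ]
        have c1 : ∑ i ∈ range c, 1/((i:ℝ)+((0:ℕ):ℝ)+1) = ∑ n ∈ range c, 1/((n:ℝ)+1) := by
          refine Finset.sum_congr rfl fun i _ => ?_
          norm_num
        have c2 : ∑ i ∈ range c, 1/(((c+1+i : ℕ):ℝ)+((0:ℕ):ℝ)+1)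
            = ∑ n ∈ range c, 1/((n:ℝ)+1+M) := by
          refine Finset.sum_congr rfl fun i _ => ?_
          rw [show ((c+1+i : ℕ):ℝ)+((0:ℕ):ℝ)+1 = (i:ℝ)+1+M by push_cast [hM]; ring]
        rw [c1, c2, show ((c:ℕ):ℝ)+((0:ℕ):ℝ)+1 = M by push_cast [hM]; ring,
          show ((c+1+c : ℕ):ℝ)+((0:ℕ):ℝ)+1 = 2*M by push_cast [hM]; ring]
      rw [hQ]
      have hMne : M ≠ 0 := ne_of_gt hMpos
      field_simp
      ring
    | succ k ih =>
      rw [show c+1+(k+1) = (c+1+k) + 1 by omega, Finset.sum_range_succ, ih,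
        hterm _ (by omega : c+1+k ≠ c)]
      have htel : (∑ i ∈ range (2*c+2), 1/((i:ℝ)+(k:ℝ)+1))
          - ∑ i ∈ range (2*c+2), 1/((i:ℝ)+((k+1:ℕ):ℝ)+1)
          = 1/((k:ℝ)+1) - 1/(((2*c+2:ℕ):ℝ)+(k:ℝ)+1) := by
        rw [← Finset.sum_sub_distrib]
        have hc : ∀ i ∈ range (2*c+2),
            1/((i:ℝ)+(k:ℝ)+1) - 1/((i:ℝ)+((k+1:ℕ):ℝ)+1)
            = -((fun j : ℕ => 1/((j:ℝ)+(k:ℝ)+1)) (i+1) - (fun j : ℕ => 1/((j:ℝ)+(k:ℝ)+1)) i) := by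
          intro i _
          push_cast
          ring
        rw [Finset.sum_congr rfl hc, Finset.sum_neg_distrib,
          Finset.sum_range_sub (fun j : ℕ => 1/((j:ℝ)+(k:ℝ)+1)) (2*c+2)]
        push_cast
        ring
      have ht1 : 1/(((c+1+k:ℕ):ℝ)+1-M) = 1/((k:ℝ)+1) := by
        rw [show ((c+1+k:ℕ):ℝ)+1-M = (k:ℝ)+1 by push_cast [hM]; ring]
      have ht2 : 1/(((c+1+k:ℕ):ℝ)+1+M) = 1/(((2*c+2:ℕ):ℝ)+(k:ℝ)+1) := by
        rw [show ((c+1+k:ℕ):ℝ)+1+M = ((2*c+2:ℕ):ℝ)+(k:ℝ)+1 by push_cast [hM]; ring]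
      rw [ht1, ht2]
      have hexp : ∀ X Y D1 D2 : ℝ, X - Y = D1 - D2 →
          1/(2*M) * (3/(2*M) - X) + 1/(2*M)*(D1 - D2) = 1/(2*M) * (3/(2*M) - Y) := by
        intro X Y D1 D2 h
        have : D1 - D2 = X - Y := h.symm
        rw [this]; ring
      exact hexp _ _ _ _ htel
  -- limits
  have hQ0 : Tendsto (fun k : ℕ => ∑ i ∈ range (2*c+2), 1/((i:ℝ)+(k:ℝ)+1)) atTop (nhds 0) := by
    have : Tendsto (fun k : ℕ => ∑ i ∈ range (2*c+2), 1/((i:ℝ)+(k:ℝ)+1)) atTop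
        (nhds (∑ i ∈ range (2*c+2), (0:ℝ))) := by
      refine tendsto_finset_sum _ fun i _ => ?_
      have h1 : Tendsto (fun k : ℕ => (i:ℝ)+(k:ℝ)+1) atTop atTop :=
        tendsto_atTop_add_const_right _ 1
          (tendsto_atTop_add_const_left _ _ tendsto_natCast_atTop_atTop)
      simpa [one_div, Pi.inv_def] using h1.inv_tendsto_atTop
    simpa using this
  have hlim1 : Tendsto (fun k : ℕ => ∑ n ∈ range (c+1+k), t n) atTop
      (nhds (1/(2*M) * (3/(2*M) - 0))) := by
    have := (tendsto_const_nhds (x := 3/(2*M)) (f := atTop (α := ℕ))).sub hQ0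
    have h2 := this.const_mul (1/(2*M))
    refine Tendsto.congr ?_ h2
    intro k; rw [key k]
  have hlim2 : Tendsto (fun k : ℕ => ∑ n ∈ range (c+1+k), t n) atTop (nhds (∑' n, t n)) := by
    have hcomp : Tendsto (fun k : ℕ => c+1+k) atTop atTop := by
      refine Tendsto.congr (fun k => by omega) (tendsto_add_atTop_nat (c+1))
    exact hts.hasSum.tendsto_sum_nat.comp hcomp
  have := tendsto_nhds_unique hlim2 hlim1
  rw [show (3:ℝ)/(4*((c:ℝ)+1)^2) = 1/(2*M) * (3/(2*M) - 0) by rw [hM]; field_simp; ring]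
  exact this

noncomputable def aux18_d (m n : ℕ) : ℝ := ((n:ℝ)+1)^2 - ((m:ℝ)+1)^2

private lemma aux18_d_ne {m n : ℕ} (h : m ≠ n) : aux18_d m n ≠ 0 := by
  unfold aux18_d
  rcases Nat.lt_or_ge m n with hlt | hge
  · have : (m:ℝ)+1 ≤ (n:ℝ) := by exact_mod_cast Nat.succ_le_of_lt hlt
    nlinarith [Nat.cast_nonneg (α := ℝ) m]
  · have hlt : n < m := lt_of_le_of_ne hge (Ne.symm h)
    have : (n:ℝ)+1 ≤ (m:ℝ) := by exact_mod_cast Nat.succ_le_of_lt hlt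
    nlinarith [Nat.cast_nonneg (α := ℝ) n]

private lemma aux18_d_ge {m n : ℕ} (h : m ≠ n) : 1 ≤ |aux18_d m n| := by
  unfold aux18_d
  rcases Nat.lt_or_ge m n with hlt | hge
  · have h1 : (m:ℝ)+1 ≤ (n:ℝ) := by exact_mod_cast Nat.succ_le_of_lt hlt
    rw [abs_of_pos (by nlinarith [Nat.cast_nonneg (α := ℝ) m])]
    nlinarith [Nat.cast_nonneg (α := ℝ) m]
  · have hlt : n < m := lt_of_le_of_ne hge (Ne.symm h)
    have h1 : (n:ℝ)+1 ≤ (m:ℝ) := by exact_mod_cast Nat.succ_le_of_lt hlt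
    rw [abs_of_neg (by nlinarith [Nat.cast_nonneg (α := ℝ) n])]
    nlinarith [Nat.cast_nonneg (α := ℝ) n]

private lemma aux18_rpow_sq {x : ℝ} (hx : 0 ≤ x) : (x^((3:ℝ)/2))^2 = x^3 := by
  rw [← Real.rpow_natCast (x^((3:ℝ)/2)) 2, ← Real.rpow_mul hx]
  norm_num

set_option maxHeartbeats 2000000 in
private lemma aux18_master {m n : ℕ} (h : m ≠ n) :
    ((m:ℝ)+1)^((3:ℝ)/2) * ((n:ℝ)+1)^((3:ℝ)/2) ≤ 8 * ((n:ℝ)+1)^2 * |aux18_d m n| := by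
  set M : ℝ := (m:ℝ)+1 with hM
  set N : ℝ := (n:ℝ)+1 with hN
  clear_value M N
  have hM1 : 1 ≤ M := by rw [hM]; nlinarith [Nat.cast_nonneg (α := ℝ) m]
  have hN1 : 1 ≤ N := by rw [hN]; nlinarith [Nat.cast_nonneg (α := ℝ) n]
  have hM0 : (0:ℝ) ≤ M := by linarith
  have hN0 : (0:ℝ) ≤ N := by linarith
  have habs : 1 ≤ |aux18_d m n| := aux18_d_ge h
  have hd2 : |aux18_d m n|^2 = (N^2 - M^2)^2 := by
    rw [sq_abs]; unfold aux18_d; rw [← hM, ← hN]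
  have hnm : 1 ≤ (N - M)^2 := by
    rcases Nat.lt_or_ge m n with hlt | hge
    · have h1 : M ≤ (n:ℝ) := by rw [hM]; exact_mod_cast Nat.succ_le_of_lt hlt
      nlinarith
    · have hlt : n < m := lt_of_le_of_ne hge (Ne.symm h)
      have h1 : N ≤ (m:ℝ) := by rw [hN]; exact_mod_cast Nat.succ_le_of_lt hlt
      nlinarith
  have hL0 : 0 ≤ M^((3:ℝ)/2) * N^((3:ℝ)/2) := by positivity
  have hR0 : 0 ≤ 8 * N^2 * |aux18_d m n| := by positivity
  have hsq : (M^((3:ℝ)/2) * N^((3:ℝ)/2))^2 ≤ (8 * N^2 * |aux18_d m n|)^2 := by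
    have e1 : (M^((3:ℝ)/2) * N^((3:ℝ)/2))^2 = M^3 * N^3 := by
      rw [mul_pow, aux18_rpow_sq hM0, aux18_rpow_sq hN0]
    have e2 : (8 * N^2 * |aux18_d m n|)^2 = 64 * N^4 * (N^2 - M^2)^2 := by
      rw [mul_pow, mul_pow, hd2]; ring
    rw [e1, e2]
    have hfact : (N^2 - M^2)^2 = (N-M)^2 * (N+M)^2 := by ring
    rcases le_total M (2*N) with hc | hc
    · have h3 : M^3 ≤ 8*N^3 := by
        have := pow_le_pow_left₀ hM0 hc 3
        calc M^3 ≤ (2*N)^3 := this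
        _ = 8*N^3 := by ring
      have h4 : N^2 ≤ (N+M)^2 := by nlinarith
      have h5 : N^2 ≤ (N^2-M^2)^2 := by
        rw [hfact]
        calc N^2 ≤ (N+M)^2 := h4
        _ = 1 * (N+M)^2 := by ring
        _ ≤ (N-M)^2 * (N+M)^2 := mul_le_mul_of_nonneg_right hnm (by positivity)
      calc M^3 * N^3 ≤ (8*N^3) * N^3 := mul_le_mul_of_nonneg_right h3 (by positivity)
      _ = 8 * N^4 * N^2 := by ring
      _ ≤ 8 * N^4 * (N^2-M^2)^2 := mul_le_mul_of_nonneg_left h5 (by positivity)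
      _ ≤ 64 * N^4 * (N^2-M^2)^2 := by
          apply mul_le_mul_of_nonneg_right _ (sq_nonneg _)
          nlinarith
    · have h3 : M^3 * N^3 ≤ M^4 * N^4 := by
        have hMp : M^3 ≤ M^4 := pow_le_pow_right₀ hM1 (by norm_num)
        have hNp : N^3 ≤ N^4 := pow_le_pow_right₀ hN1 (by norm_num)
        exact mul_le_mul hMp hNp (by positivity) (by positivity)
      have h4 : M^2/4 ≤ (N-M)^2 := by nlinarith
      have h5 : M^2 ≤ (N+M)^2 := by nlinarith
      have h6 : M^4/4 ≤ (N^2-M^2)^2 := by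
        rw [hfact]
        calc M^4/4 = (M^2/4) * M^2 := by ring
        _ ≤ (N-M)^2 * (N+M)^2 := mul_le_mul h4 h5 (by positivity) (by positivity)
      calc M^3 * N^3 ≤ M^4 * N^4 := h3
      _ = 4 * N^4 * (M^4/4) := by ring
      _ ≤ 4 * N^4 * (N^2-M^2)^2 := mul_le_mul_of_nonneg_left h6 (by positivity)
      _ ≤ 64 * N^4 * (N^2-M^2)^2 := by
          apply mul_le_mul_of_nonneg_right _ (sq_nonneg _)
          nlinarith
  calc M^((3:ℝ)/2) * N^((3:ℝ)/2)
      = Real.sqrt ((M^((3:ℝ)/2) * N^((3:ℝ)/2))^2) := (Real.sqrt_sq hL0).symm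
    _ ≤ Real.sqrt ((8 * N^2 * |aux18_d m n|)^2) := Real.sqrt_le_sqrt hsq
    _ = 8 * N^2 * |aux18_d m n| := Real.sqrt_sq hR0

private lemma aux18_rpow_sum : Summable (fun n : ℕ => 1/((n:ℝ)+1)^((3:ℝ)/2)) := by
  have h := Real.summable_one_div_nat_rpow.mpr (by norm_num : (1:ℝ) < 3/2)
  refine ((summable_nat_add_iff 1).mpr h).congr ?_
  intro n; push_cast; ring

private lemma aux18_majorant {G : ℕ → ℕ → ℝ} (C : ℝ) (hC : 0 ≤ C)
    (hG : ∀ m n, |G m n| ≤ C/(((m:ℝ)+1)^((3:ℝ)/2) * ((n:ℝ)+1)^((3:ℝ)/2))) :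
    Summable (Function.uncurry G) := by
  have hnn : ∀ k : ℕ, (0:ℝ) ≤ 1/((k:ℝ)+1)^((3:ℝ)/2) := fun k => by positivity
  have hs : Summable (fun p : ℕ×ℕ => (C * (1/((p.1:ℝ)+1)^((3:ℝ)/2))) * (1/((p.2:ℝ)+1)^((3:ℝ)/2))) :=
    Summable.mul_of_nonneg (f := fun m : ℕ => C * (1/((m:ℝ)+1)^((3:ℝ)/2)))
      (g := fun j : ℕ => 1/((j:ℝ)+1)^((3:ℝ)/2))
      (aux18_rpow_sum.mul_left C) aux18_rpow_sum
      (Pi.le_def.mpr fun k => mul_nonneg hC (hnn k)) (Pi.le_def.mpr hnn)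
  refine Summable.of_norm_bounded hs ?_
  · intro p
    rw [Real.norm_eq_abs]
    have e : (C * (1/((p.1:ℝ)+1)^((3:ℝ)/2))) * (1/((p.2:ℝ)+1)^((3:ℝ)/2))
        = C/(((p.1:ℝ)+1)^((3:ℝ)/2) * ((p.2:ℝ)+1)^((3:ℝ)/2)) := by
      rw [mul_one_div, mul_one_div, div_div]
    rw [e]
    exact hG p.1 p.2

private lemma aux18_Gbound {φ : ℕ → ℝ} {K : ℝ} (hK : 0 ≤ K)
    (hφ : ∀ j, |φ j| ≤ K/((j:ℝ)+1)^2) (k : ℕ) (hk : 1 ≤ k) {m n : ℕ} (h : m ≠ n) :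
    |φ n / (aux18_d m n)^k| ≤ (8*K) / (((m:ℝ)+1)^((3:ℝ)/2) * ((n:ℝ)+1)^((3:ℝ)/2)) := by
  have hd1 : 1 ≤ |aux18_d m n| := aux18_d_ge h
  have hdpos : 0 < |aux18_d m n| := lt_of_lt_of_le one_pos hd1
  have hdk : |aux18_d m n| ≤ |aux18_d m n|^k := le_self_pow₀ (by linarith) (by omega)
  have hdkpos : 0 < |aux18_d m n|^k := pow_pos hdpos k
  have hN2 : (0:ℝ) < ((n:ℝ)+1)^2 := by positivity
  have step1 : |φ n / (aux18_d m n)^k| = |φ n| / |aux18_d m n|^k := by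
    rw [abs_div, abs_pow]
  rw [step1]
  have step2 : |φ n| / |aux18_d m n|^k ≤ |φ n| / |aux18_d m n| :=
    div_le_div_of_nonneg_left (abs_nonneg _) hdpos hdk
  have step3 : |φ n| / |aux18_d m n| ≤ (K/((n:ℝ)+1)^2) / |aux18_d m n| := by
    gcongr
    exact hφ n
  refine (step2.trans step3).trans ?_
  have hM32 : 0 < ((m:ℝ)+1)^((3:ℝ)/2) * ((n:ℝ)+1)^((3:ℝ)/2) := by positivity
  rw [div_div, div_le_div_iff₀ (by positivity) hM32]
  nlinarith [mul_le_mul_of_nonneg_left (aux18_master h) hK, hN2, hdpos, hM32]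

private lemma aux18_sumG {φ : ℕ → ℝ} {K : ℝ} (hK : 0 ≤ K)
    (hφ : ∀ j, |φ j| ≤ K/((j:ℝ)+1)^2) (k : ℕ) (hk : 1 ≤ k) :
    Summable (Function.uncurry fun m n : ℕ =>
      if n = m then 0 else φ n/(aux18_d m n)^k) := by
  refine aux18_majorant (8*K) (by linarith) (fun m n => ?_)
  by_cases h : n = m
  · rw [if_pos h, abs_zero]
    positivity
  · rw [if_neg h]
    exact aux18_Gbound hK hφ k hk (fun he => h (he.symm))

private lemma aux18_sumG' {φ : ℕ → ℝ} {K : ℝ} (hK : 0 ≤ K)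
    (hφ : ∀ j, |φ j| ≤ K/((j:ℝ)+1)^2) (k : ℕ) (hk : 1 ≤ k) :
    Summable (Function.uncurry fun m n : ℕ =>
      if n = m then 0 else φ m/(aux18_d m n)^k) := by
  refine aux18_majorant (8*K) (by linarith) (fun m n => ?_)
  by_cases h : n = m
  · rw [if_pos h, abs_zero]
    positivity
  · rw [if_neg h]
    have hb := aux18_Gbound hK hφ k hk (h : n ≠ m)
    have hdsym : (aux18_d n m)^k = ((-1)^k) * (aux18_d m n)^k := by
      rw [show aux18_d n m = -aux18_d m n by unfold aux18_d; ring]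
      rw [neg_pow]
    have habs : |φ m / (aux18_d m n)^k| = |φ m / (aux18_d n m)^k| := by
      rw [abs_div, abs_div, abs_pow, abs_pow,
        show |aux18_d n m| = |aux18_d m n| by rw [show aux18_d n m = -aux18_d m n by unfold aux18_d; ring, abs_neg]]
    rw [habs, mul_comm (((m:ℝ)+1)^((3:ℝ)/2))]
    exact hb

private lemma aux18_pf1 {x y d : ℝ} (hx : x ≠ 0) (hy : y ≠ 0) (hd : d ≠ 0) (hxy : d = y - x) :
    1/x * (1/y) = 1/x * (1/d) - (1/y)/d := by
  subst hxy
  field_simp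

private lemma aux18_pf2 {x y d : ℝ} (hx : x ≠ 0) (hy : y ≠ 0) (hd : d ≠ 0) (hxy : d = y - x) :
    1/x * (1/y^2) = 1/x * (1/d^2) - (1/y)/d^2 - (1/y^2)/d := by
  subst hxy
  field_simp

theorem aux18_main (a : ℝ) (hb : ∀ n : ℕ, ((n:ℝ)+1)^2 - a^2 ≠ 0) :
    5 / 2 * (∑' n : ℕ, 1 / (((n:ℝ)+1) ^ 2 - a ^ 2) ^ 2)
        - (∑' n : ℕ, 1 / (((n:ℝ)+1) ^ 2 - a ^ 2)) ^ 2 =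
      2 * a ^ 2 *
        ((∑' n : ℕ, 1 / (((n:ℝ)+1) ^ 2 - a ^ 2)) *
            (∑' n : ℕ, 1 / (((n:ℝ)+1) ^ 2 - a ^ 2) ^ 2)
          - ∑' n : ℕ, 1 / (((n:ℝ)+1) ^ 2 - a ^ 2) ^ 3) := by
  classical
  obtain ⟨K, hK2, hKb⟩ := aux18_bound (a^2)
  have hK0 : (0:ℝ) ≤ K := by linarith
  set f : ℕ → ℝ := fun n => 1 / (((n:ℝ)+1) ^ 2 - a ^ 2) with hfdef
  set g : ℕ → ℝ := fun n => 1 / (((n:ℝ)+1) ^ 2 - a ^ 2) ^ 2 with hgdef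
  set h3 : ℕ → ℝ := fun n => 1 / (((n:ℝ)+1) ^ 2 - a ^ 2) ^ 3 with hh3def
  have hone : ∀ n : ℕ, (1:ℝ) ≤ ((n:ℝ)+1)^2 := by
    intro n; nlinarith [Nat.cast_nonneg (α := ℝ) n]
  -- pointwise facts
  have hfb : ∀ n, |f n| ≤ K/((n:ℝ)+1)^2 := fun n => by
    simp only [hfdef]; exact hKb n
  have hfK : ∀ n, |f n| ≤ K := fun n => (hfb n).trans (div_le_self hK0 (hone n))
  have hgf : ∀ n, g n = f n * f n := fun n => by
    simp only [hfdef, hgdef]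
    rw [pow_two]
    exact (one_div_mul_one_div _ _).symm
  have hfgh : ∀ n, f n * g n = h3 n := fun n => by
    simp only [hfdef, hgdef, hh3def]
    rw [one_div_mul_one_div]
    congr 1
    ring
  have hgb : ∀ n, |g n| ≤ (K*K)/((n:ℝ)+1)^2 := fun n => by
    rw [hgf n, abs_mul]
    calc |f n| * |f n| ≤ K * (K/((n:ℝ)+1)^2) :=
          mul_le_mul (hfK n) (hfb n) (abs_nonneg _) hK0
    _ = K*K/((n:ℝ)+1)^2 := by ring
  have hKK0 : (0:ℝ) ≤ K*K := mul_nonneg hK0 hK0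
  have hhb : ∀ n, |h3 n| ≤ (K*(K*K))/((n:ℝ)+1)^2 := fun n => by
    rw [← hfgh n, abs_mul]
    calc |f n| * |g n| ≤ K * (K*K/((n:ℝ)+1)^2) :=
          mul_le_mul (hfK n) (hgb n) (abs_nonneg _) hK0
    _ = K*(K*K)/((n:ℝ)+1)^2 := by ring
  -- summabilities
  have hfs : Summable f := aux18_summable_of_bound f K hfb
  have hgs : Summable g := aux18_summable_of_bound g (K*K) hgb
  have hhs : Summable h3 := aux18_summable_of_bound h3 (K*(K*K)) hhb
  have hffs : Summable (fun n => f n * f n) := hgs.congr (fun n => hgf n)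
  -- b-difference identity
  have hdb : ∀ m n : ℕ, aux18_d m n = (((n:ℝ)+1)^2 - a^2) - (((m:ℝ)+1)^2 - a^2) := by
    intro m n; unfold aux18_d; ring
  -- A values
  have hAval : ∀ m : ℕ, (∑' n : ℕ, if n = m then 0 else 1/(aux18_d m n))
      = 3/(4*((m:ℝ)+1)^2) := fun m => by
    simpa [aux18_d] using aux18_A m
  have hAval' : ∀ n : ℕ, (∑' m : ℕ, if m = n then 0 else 1/(aux18_d m n))
      = -(3/(4*((n:ℝ)+1)^2)) := fun n => by
    have e : ∀ m : ℕ, (if m = n then 0 else 1/(aux18_d m n))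
        = -(if m = n then 0 else 1/(((m:ℝ)+1)^2 - ((n:ℝ)+1)^2)) := by
      intro m
      by_cases h : m = n
      · simp [h]
      · rw [if_neg h, if_neg h,
          show aux18_d m n = -((((m:ℝ)+1)^2 - ((n:ℝ)+1)^2)) from by unfold aux18_d; ring,
          one_div, inv_neg, one_div]
    rw [tsum_congr e, tsum_neg, aux18_A n]
  -- row summabilities
  have htrow : ∀ m : ℕ, Summable (fun n : ℕ => if n = m then 0 else 1/(aux18_d m n)) := by
    intro m
    simpa [aux18_d] using aux18_ts m
  have htrow2 : ∀ m : ℕ, Summable (fun n : ℕ => if n = m then 0 else 1/(aux18_d m n)^2) := by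
    intro m
    refine Summable.of_norm_bounded (htrow m).abs (fun n => ?_)
    rw [Real.norm_eq_abs]
    by_cases h : n = m
    · simp [h]
    · rw [if_neg h, if_neg h, abs_div, abs_div, abs_one, abs_pow]
      have h1 := aux18_d_ge (fun he => h (he.symm))
      have h2 : |aux18_d m n| ≤ |aux18_d m n|^2 := le_self_pow₀ (by linarith) (by norm_num)
      exact div_le_div_of_nonneg_left zero_le_one (by linarith) h2
  -- uncurried summabilities
  have hU1 : Summable (Function.uncurry fun m n : ℕ =>
      if n = m then 0 else f n / aux18_d m n) := by
    have h := aux18_sumG hK0 hfb 1 le_rfl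
    refine h.congr (fun p => ?_)
    simp [Function.uncurry]
  have hU2 : Summable (Function.uncurry fun m n : ℕ =>
      if n = m then 0 else f n / (aux18_d m n)^2) := aux18_sumG hK0 hfb 2 (by norm_num)
  have hU2t : Summable (Function.uncurry fun m n : ℕ =>
      if n = m then 0 else f m / (aux18_d m n)^2) := aux18_sumG' hK0 hfb 2 (by norm_num)
  have hU3 : Summable (Function.uncurry fun m n : ℕ =>
      if n = m then 0 else g n / aux18_d m n) := by
    have h := aux18_sumG hKK0 hgb 1 le_rfl
    refine h.congr (fun p => ?_)
    simp [Function.uncurry]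
  -- constants
  have hcb0 : ∀ n : ℕ, (0:ℝ) < 3/(4*((n:ℝ)+1)^2) := fun n => by positivity
  have hcb1 : ∀ n : ℕ, 3/(4*((n:ℝ)+1)^2) ≤ 1 := fun n => by
    rw [div_le_one (by positivity)]
    nlinarith [hone n]
  have hP1s : Summable (fun n => f n * (3/(4*((n:ℝ)+1)^2))) := by
    refine aux18_summable_of_bound _ K (fun n => ?_)
    rw [abs_mul, abs_of_pos (hcb0 n)]
    calc |f n| * (3/(4*((n:ℝ)+1)^2)) ≤ (K/((n:ℝ)+1)^2) * 1 :=
          mul_le_mul (hfb n) (hcb1 n) (le_of_lt (hcb0 n)) (div_nonneg hK0 (by positivity))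
    _ = K/((n:ℝ)+1)^2 := mul_one _
  have hQs : Summable (fun n => g n * (3/(4*((n:ℝ)+1)^2))) := by
    refine aux18_summable_of_bound _ (K*K) (fun n => ?_)
    rw [abs_mul, abs_of_pos (hcb0 n)]
    calc |g n| * (3/(4*((n:ℝ)+1)^2)) ≤ (K*K/((n:ℝ)+1)^2) * 1 :=
          mul_le_mul (hgb n) (hcb1 n) (le_of_lt (hcb0 n)) (div_nonneg hKK0 (by positivity))
    _ = K*K/((n:ℝ)+1)^2 := mul_one _
  -- diagonal splits
  have hinner1 : ∀ m, f m * (∑' n, f n) = f m * f m + ∑' n, (if n = m then 0 else f m * f n) := by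
    intro m
    rw [← tsum_mul_left]
    exact Summable.tsum_eq_add_tsum_ite (hfs.mul_left (f m)) m
  have hR1s : Summable (fun m => ∑' n, (if n = m then 0 else f m * f n)) := by
    have he : (fun m => ∑' n, (if n = m then 0 else f m * f n))
        = fun m => f m * (∑' n, f n) - f m * f m := by
      funext m
      rw [hinner1 m]; ring
    rw [he]
    exact (hfs.mul_right _).sub hffs
  have eq1 : (∑' n, f n) * (∑' n, f n)
      = (∑' n, g n) + ∑' m, ∑' n, (if n = m then 0 else f m * f n) := by
    calc (∑' n, f n) * (∑' n, f n) = ∑' m, f m * (∑' n, f n) := by rw [tsum_mul_right]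
    _ = ∑' m, (f m * f m + ∑' n, (if n = m then 0 else f m * f n)) := tsum_congr hinner1
    _ = (∑' m, f m * f m) + ∑' m, ∑' n, (if n = m then 0 else f m * f n) := Summable.tsum_add hffs hR1s
    _ = (∑' n, g n) + ∑' m, ∑' n, (if n = m then 0 else f m * f n) := by
        congr 1
        exact tsum_congr fun n => (hgf n).symm
  have hinner2 : ∀ m, f m * (∑' n, g n) = h3 m + ∑' n, (if n = m then 0 else f m * g n) := by
    intro m
    rw [← tsum_mul_left, Summable.tsum_eq_add_tsum_ite (hgs.mul_left (f m)) m, hfgh m]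
  have hR2s : Summable (fun m => ∑' n, (if n = m then 0 else f m * g n)) := by
    have he : (fun m => ∑' n, (if n = m then 0 else f m * g n))
        = fun m => f m * (∑' n, g n) - h3 m := by
      funext m
      rw [hinner2 m]; ring
    rw [he]
    exact (hfs.mul_right _).sub hhs
  have eq2 : (∑' n, f n) * (∑' n, g n)
      = (∑' n, h3 n) + ∑' m, ∑' n, (if n = m then 0 else f m * g n) := by
    calc (∑' n, f n) * (∑' n, g n) = ∑' m, f m * (∑' n, g n) := by rw [tsum_mul_right]
    _ = ∑' m, (h3 m + ∑' n, (if n = m then 0 else f m * g n)) := tsum_congr hinner2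
    _ = (∑' m, h3 m) + ∑' m, ∑' n, (if n = m then 0 else f m * g n) := Summable.tsum_add hhs hR2s
  -- partial fractions, D1
  have hsplit1 : ∀ m n : ℕ, (if n = m then 0 else f m * f n)
      = f m * (if n = m then 0 else 1/(aux18_d m n))
        - (if n = m then 0 else f n / aux18_d m n) := by
    intro m n
    by_cases h : n = m
    · simp [h]
    · rw [if_neg h, if_neg h, if_neg h]
      have hmn : m ≠ n := fun he => h he.symm
      simp only [hfdef]
      exact aux18_pf1 (hb m) (hb n) (aux18_d_ne hmn) (hdb m n)
  have hXrow1 : ∀ m, Summable (fun n => f m * (if n = m then 0 else 1/(aux18_d m n))) :=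
    fun m => (htrow m).mul_left _
  have hYrow1 : ∀ m, Summable (fun n => if n = m then 0 else f n / aux18_d m n) := by
    intro m
    simpa [Function.uncurry] using hU1.prod_factor m
  have hYcol1 : Summable (fun m => ∑' n, (if n = m then 0 else f n / aux18_d m n)) := by
    simpa [Function.uncurry] using hU1.prod
  have hswap1 : (∑' m, ∑' n, (if n = m then 0 else f n / aux18_d m n))
      = -(∑' n, f n * (3/(4*((n:ℝ)+1)^2))) := by
    rw [← Summable.tsum_comm hU1]
    have inner : ∀ n, (∑' m, (if n = m then 0 else f n / aux18_d m n))
        = -(f n * (3/(4*((n:ℝ)+1)^2))) := by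
      intro n
      have e : ∀ m : ℕ, (if n = m then 0 else f n / aux18_d m n)
          = f n * (if m = n then 0 else 1/(aux18_d m n)) := by
        intro m
        by_cases h : m = n
        · simp [h]
        · rw [if_neg (fun he => h he.symm), if_neg h, mul_one_div]
      rw [tsum_congr e, tsum_mul_left, hAval' n]
      ring
    rw [tsum_congr inner, tsum_neg]
  have hD1 : (∑' m, ∑' n, (if n = m then 0 else f m * f n))
      = (∑' n, f n * (3/(4*((n:ℝ)+1)^2))) + (∑' n, f n * (3/(4*((n:ℝ)+1)^2))) := by
    have step1 : ∀ m, (∑' n, (if n = m then 0 else f m * f n))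
        = f m * (3/(4*((m:ℝ)+1)^2)) - ∑' n, (if n = m then 0 else f n / aux18_d m n) := by
      intro m
      rw [tsum_congr (fun n => hsplit1 m n), Summable.tsum_sub (hXrow1 m) (hYrow1 m),
        tsum_mul_left, hAval m]
    rw [tsum_congr step1, Summable.tsum_sub hP1s hYcol1, hswap1]
    ring
  -- partial fractions, D2
  have hsplit2 : ∀ m n : ℕ, (if n = m then 0 else f m * g n)
      = f m * (if n = m then 0 else 1/(aux18_d m n)^2)
        - (if n = m then 0 else f n / (aux18_d m n)^2)
        - (if n = m then 0 else g n / aux18_d m n) := by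
    intro m n
    by_cases h : n = m
    · simp [h]
    · rw [if_neg h, if_neg h, if_neg h, if_neg h]
      have hmn : m ≠ n := fun he => h he.symm
      simp only [hfdef, hgdef]
      exact aux18_pf2 (hb m) (hb n) (aux18_d_ne hmn) (hdb m n)
  have hXrow2 : ∀ m, Summable (fun n => f m * (if n = m then 0 else 1/(aux18_d m n)^2)) :=
    fun m => (htrow2 m).mul_left _
  have hYrow2 : ∀ m, Summable (fun n => if n = m then 0 else f n / (aux18_d m n)^2) := by
    intro m
    simpa [Function.uncurry] using hU2.prod_factor m
  have hWrow : ∀ m, Summable (fun n => if n = m then 0 else g n / aux18_d m n) := by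
    intro m
    simpa [Function.uncurry] using hU3.prod_factor m
  have hXcol2 : Summable (fun m => ∑' n, f m * (if n = m then 0 else 1/(aux18_d m n)^2)) := by
    refine (hU2t.prod).congr (fun m => tsum_congr fun n => ?_)
    simp only [Function.uncurry]
    by_cases h : n = m
    · simp [h]
    · rw [if_neg h, if_neg h, mul_one_div]
  have hYcol2 : Summable (fun m => ∑' n, (if n = m then 0 else f n / (aux18_d m n)^2)) := by
    simpa [Function.uncurry] using hU2.prod
  have hWcol : Summable (fun m => ∑' n, (if n = m then 0 else g n / aux18_d m n)) := by
    simpa [Function.uncurry] using hU3.prod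
  have hswap2 : (∑' m, ∑' n, (if n = m then 0 else f n / (aux18_d m n)^2))
      = ∑' n, f n * (∑' m, (if m = n then 0 else 1/(aux18_d m n)^2)) := by
    rw [← Summable.tsum_comm hU2]
    refine tsum_congr fun n => ?_
    have e : ∀ m : ℕ, (if n = m then 0 else f n / (aux18_d m n)^2)
        = f n * (if m = n then 0 else 1/(aux18_d m n)^2) := by
      intro m
      by_cases h : m = n
      · simp [h]
      · rw [if_neg (fun he => h he.symm), if_neg h, mul_one_div]
    rw [tsum_congr e, tsum_mul_left]
  have hBB : ∀ n : ℕ, (∑' m, (if m = n then 0 else 1/(aux18_d m n)^2))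
      = ∑' j, (if j = n then 0 else 1/(aux18_d n j)^2) := by
    intro n
    refine tsum_congr fun m => ?_
    by_cases h : m = n
    · simp [h]
    · rw [if_neg h, if_neg h, show (aux18_d m n)^2 = (aux18_d n m)^2 from by unfold aux18_d; ring]
  have hswap3 : (∑' m, ∑' n, (if n = m then 0 else g n / aux18_d m n))
      = -(∑' n, g n * (3/(4*((n:ℝ)+1)^2))) := by
    rw [← Summable.tsum_comm hU3]
    have inner : ∀ n, (∑' m, (if n = m then 0 else g n / aux18_d m n))
        = -(g n * (3/(4*((n:ℝ)+1)^2))) := by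
      intro n
      have e : ∀ m : ℕ, (if n = m then 0 else g n / aux18_d m n)
          = g n * (if m = n then 0 else 1/(aux18_d m n)) := by
        intro m
        by_cases h : m = n
        · simp [h]
        · rw [if_neg (fun he => h he.symm), if_neg h, mul_one_div]
      rw [tsum_congr e, tsum_mul_left, hAval' n]
      ring
    rw [tsum_congr inner, tsum_neg]
  have hD2 : (∑' m, ∑' n, (if n = m then 0 else f m * g n))
      = ∑' n, g n * (3/(4*((n:ℝ)+1)^2)) := by
    have step2 : ∀ m, (∑' n, (if n = m then 0 else f m * g n))
        = (∑' n, f m * (if n = m then 0 else 1/(aux18_d m n)^2))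
          - (∑' n, (if n = m then 0 else f n / (aux18_d m n)^2))
          - (∑' n, (if n = m then 0 else g n / aux18_d m n)) := by
      intro m
      rw [tsum_congr (fun n => hsplit2 m n),
        Summable.tsum_sub ((hXrow2 m).sub (hYrow2 m)) (hWrow m), Summable.tsum_sub (hXrow2 m) (hYrow2 m)]
    rw [tsum_congr step2, Summable.tsum_sub (hXcol2.sub hYcol2) hWcol, Summable.tsum_sub hXcol2 hYcol2,
      hswap2, hswap3]
    rw [tsum_congr (fun m : ℕ => (tsum_mul_left :
      ∑' n, f m * (if n = m then 0 else 1/(aux18_d m n)^2)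
        = f m * ∑' n, (if n = m then 0 else 1/(aux18_d m n)^2)))]
    rw [tsum_congr (fun n : ℕ => by rw [hBB n] :
      ∀ n : ℕ, f n * (∑' m, (if m = n then 0 else 1/(aux18_d m n)^2))
        = f n * (∑' j, (if j = n then 0 else 1/(aux18_d n j)^2)))]
    ring
  -- termwise identity closing the loop
  have hPQ : 2*(∑' n, f n * (3/(4*((n:ℝ)+1)^2)))
        + 2*a^2*(∑' n, g n * (3/(4*((n:ℝ)+1)^2)))
      = 3/2 * (∑' n, g n) := by
    have e1 : 2*(∑' n, f n * (3/(4*((n:ℝ)+1)^2)))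
        = ∑' n, 2*(f n * (3/(4*((n:ℝ)+1)^2))) := (tsum_mul_left).symm
    have e2 : 2*a^2*(∑' n, g n * (3/(4*((n:ℝ)+1)^2)))
        = ∑' n, 2*a^2*(g n * (3/(4*((n:ℝ)+1)^2))) := (tsum_mul_left).symm
    have e3 : (3:ℝ)/2 * (∑' n, g n) = ∑' n, 3/2 * g n := (tsum_mul_left).symm
    rw [e1, e2, e3, ← Summable.tsum_add (hP1s.mul_left 2) (hQs.mul_left (2*a^2))]
    refine tsum_congr fun n => ?_
    simp only [hfdef, hgdef]
    have hbn := hb n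
    have hn1 : ((n:ℝ)+1) ≠ 0 := by positivity
    field_simp
    ring
  linear_combination (-1 : ℝ)*eq1 - hD1 - (2*a^2)*eq2 - (2*a^2)*hD2 - hPQ

end Aux18

theorem stmt18 (a : ℝ) (ha : ∀ k : ℤ, a ≠ (k : ℝ)) :
    5 / 2 * (∑' n : ℕ, 1 / (((n + 1 : ℝ)) ^ 2 - a ^ 2) ^ 2)
        - (∑' n : ℕ, 1 / (((n + 1 : ℝ)) ^ 2 - a ^ 2)) ^ 2 =
      2 * a ^ 2 *
        ((∑' n : ℕ, 1 / (((n + 1 : ℝ)) ^ 2 - a ^ 2)) *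
            (∑' n : ℕ, 1 / (((n + 1 : ℝ)) ^ 2 - a ^ 2) ^ 2)
          - ∑' n : ℕ, 1 / (((n + 1 : ℝ)) ^ 2 - a ^ 2) ^ 3) := by
  have hb : ∀ n : ℕ, ((n:ℝ)+1)^2 - a^2 ≠ 0 := by
    intro n h
    have h2 : (a - ((n:ℝ)+1)) * (a + ((n:ℝ)+1)) = 0 := by linear_combination -h
    rcases mul_eq_zero.mp h2 with h3 | h3
    · exact ha ((n:ℤ)+1) (by push_cast; linarith)
    · exact ha (-((n:ℤ)+1)) (by push_cast; linarith)
  exact aux18_main a hb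
end

section
/- For integers m, p ≥ 2, real numbers a, b with a, b ≠ −1, −2, …, the identity (in the limit x → 1 of the product-integral relation) holds: ∑_{n=1}^∞ ((−1)^{p−1}/(n+a)^{m+p} − (−1)^{m−1}/(n+b)^{m+p})·(∑_{k=1}^n 1/(k+a+b)) = ∑_{k=1}^{m−1} (−1)^{k−1}·ζ(m+1−k, a+1)·ζ(p+k, b+1) − ∑_{k=1}^{p−1} (−1)^{k−1}·ζ(p+1−k, b+1)·ζ(m+k, a+1) + b·(−1)^{m−1}·ζ(m+p, b+1)·∑_{n=1}^∞ 1/((n+a)(n+a+b)) − a·(−1)^{p−1}·ζ(m+p, a+1)·∑_{n=1}^∞ 1/((n+b)(n+a+b)). -/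
open Finset

lemma lem_ne (a : ℝ) (ha : ∀ k : ℕ, a ≠ -((k : ℝ) + 1)) (n : ℕ) : ((n:ℝ) + 1 + a) ≠ 0 := by
  intro h
  exact ha n (by linarith)

lemma lem_bound (a : ℝ) (ha : ∀ k : ℕ, a ≠ -((k : ℝ) + 1)) :
    ∃ C : ℝ, 1 ≤ C ∧ ∀ n : ℕ, |1 / ((n:ℝ) + 1 + a)| ≤ C / ((n:ℝ) + 1) := by
  set N : ℕ := ⌈2 * |a|⌉₊ with hN
  have hsum0 : (0:ℝ) ≤ ∑ n ∈ range N, ((n:ℝ) + 1) * |1 / ((n:ℝ) + 1 + a)| :=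
    Finset.sum_nonneg fun k _ => by positivity
  refine ⟨2 + ∑ n ∈ range N, ((n:ℝ) + 1) * |1 / ((n:ℝ) + 1 + a)|, by linarith, fun n => ?_⟩
  have hn1 : (0:ℝ) < (n:ℝ) + 1 := by positivity
  rw [le_div_iff₀ hn1, mul_comm]
  by_cases hcase : n < N
  · calc ((n:ℝ) + 1) * |1 / ((n:ℝ) + 1 + a)|
        ≤ ∑ k ∈ range N, ((k:ℝ) + 1) * |1 / ((k:ℝ) + 1 + a)| := by
          apply Finset.single_le_sum (f := fun k : ℕ => ((k:ℝ) + 1) * |1 / ((k:ℝ) + 1 + a)|)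
            (fun k _ => by positivity) (Finset.mem_range.mpr hcase)
      _ ≤ 2 + ∑ k ∈ range N, ((k:ℝ) + 1) * |1 / ((k:ℝ) + 1 + a)| := by linarith
  · push_neg at hcase
    have h2a : 2 * |a| ≤ (n:ℝ) := le_trans (Nat.le_ceil _) (by exact_mod_cast hcase)
    have habs : ((n:ℝ) + 1) / 2 ≤ |(n:ℝ) + 1 + a| := by
      have := abs_le.mp (le_refl |a|)
      have h1 : -( ((n:ℝ)+1)/2 ) ≥ -((n:ℝ)+1+a) ∨ True := by tauto
      cases' abs_cases a with hc hc <;> cases' abs_cases ((n:ℝ) + 1 + a) with hd hd <;> nlinarith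
    have hpos : (0:ℝ) < |(n:ℝ) + 1 + a| := lt_of_lt_of_le (by positivity) habs
    have : |1 / ((n:ℝ) + 1 + a)| = 1 / |(n:ℝ) + 1 + a| := by
      rw [abs_div, abs_one]
    rw [this]
    have : ((n:ℝ) + 1) * (1 / |(n:ℝ) + 1 + a|) ≤ 2 := by
      rw [mul_one_div, div_le_iff₀ hpos]; linarith
    have hsum : (0:ℝ) ≤ ∑ k ∈ range N, ((k:ℝ) + 1) * |1 / ((k:ℝ) + 1 + a)| :=
      Finset.sum_nonneg fun k _ => by positivity
    linarith

lemma lem_base2 : Summable (fun n : ℕ => 1 / ((n:ℝ) + 1) ^ 2) := by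
  have h := (summable_nat_add_iff 1).mpr (Real.summable_one_div_nat_pow.mpr one_lt_two)
  refine h.congr fun n => ?_
  push_cast
  ring

lemma lem_pow_bound (a C : ℝ) (hC : 1 ≤ C)
    (hbd : ∀ n : ℕ, |1 / ((n:ℝ) + 1 + a)| ≤ C / ((n:ℝ) + 1))
    {u : ℕ} (hu : 2 ≤ u) (i : ℕ) :
    |1 / ((i:ℝ) + 1 + a) ^ u| ≤ C ^ u / ((i:ℝ) + 1) ^ 2 := by
  have hi1 : (1:ℝ) ≤ (i:ℝ) + 1 := by nlinarith [Nat.cast_nonneg (α := ℝ) i]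
  have h1 : |1 / ((i:ℝ) + 1 + a) ^ u| = |1 / ((i:ℝ) + 1 + a)| ^ u := by
    rw [← abs_pow]; ring_nf
  rw [h1]
  calc |1 / ((i:ℝ) + 1 + a)| ^ u ≤ (C / ((i:ℝ) + 1)) ^ u :=
        pow_le_pow_left₀ (abs_nonneg _) (hbd i) u
    _ = C ^ u / ((i:ℝ) + 1) ^ u := by rw [div_pow]
    _ ≤ C ^ u / ((i:ℝ) + 1) ^ 2 := by
        apply div_le_div_of_nonneg_left (by positivity) (by positivity)
        exact pow_le_pow_right₀ hi1 hu

lemma lem_lin_bound (a C : ℝ) (hC : 1 ≤ C)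
    (hbd : ∀ n : ℕ, |1 / ((n:ℝ) + 1 + a)| ≤ C / ((n:ℝ) + 1)) (i : ℕ) :
    |1 / ((i:ℝ) + 1 + a)| ≤ C := by
  refine le_trans (hbd i) ?_
  rw [div_le_iff₀ (by positivity)]
  nlinarith [Nat.cast_nonneg (α := ℝ) i]

lemma lem_summable_pow (a C : ℝ) (hC : 1 ≤ C)
    (hbd : ∀ n : ℕ, |1 / ((n:ℝ) + 1 + a)| ≤ C / ((n:ℝ) + 1))
    {u : ℕ} (hu : 2 ≤ u) :
    Summable (fun n : ℕ => 1 / ((n:ℝ) + 1 + a) ^ u) := by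
  apply Summable.of_norm
  apply Summable.of_nonneg_of_le (fun n => norm_nonneg _)
    (fun n => ?_) ((lem_base2.mul_left (C ^ u)))
  calc ‖1 / ((n:ℝ) + 1 + a) ^ u‖ = |1 / ((n:ℝ) + 1 + a) ^ u| := rfl
    _ ≤ C ^ u / ((n:ℝ) + 1) ^ 2 := lem_pow_bound a C hC hbd hu n
    _ = C ^ u * (1 / ((n:ℝ) + 1) ^ 2) := by ring

lemma lem_summable_of_le_prod (K : ℝ) (f : ℕ × ℕ → ℝ)
    (h : ∀ z : ℕ × ℕ, |f z| ≤ K * (1 / ((z.1:ℝ) + 1) ^ 2 * (1 / ((z.2:ℝ) + 1) ^ 2))) :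
    Summable f := by
  apply Summable.of_norm
  refine Summable.of_nonneg_of_le (fun z => norm_nonneg _) (fun z => h z) ?_
  exact (lem_base2.mul_of_nonneg lem_base2 (fun n => by positivity)
    (fun n => by positivity)).mul_left K

lemma lem_telescope (f : ℕ → ℝ) (hf0 : Filter.Tendsto f Filter.atTop (nhds 0))
    (hs : Summable fun n => f n - f (n + 1)) :
    HasSum (fun n => f n - f (n + 1)) (f 0) := by
  have h1 := hs.hasSum
  have h2 := h1.tendsto_sum_nat
  have h3 : ∀ n : ℕ, ∑ i ∈ range n, (f i - f (i + 1)) = f 0 - f n := by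
    intro n
    induction n with
    | zero => simp
    | succ k ih => rw [Finset.sum_range_succ, ih]; ring
  have h4 : Filter.Tendsto (fun n => ∑ i ∈ range n, (f i - f (i + 1)))
      Filter.atTop (nhds (f 0)) := by
    simp only [h3]
    have := Filter.Tendsto.sub (tendsto_const_nhds (x := f 0)) hf0
    simpa using this
  have := tendsto_nhds_unique h2 h4
  rwa [this] at h1

lemma lem_tendsto_zero (c : ℝ) :
    Filter.Tendsto (fun n : ℕ => 1 / ((n:ℝ) + 1 + c)) Filter.atTop (nhds 0) := by
  have h : Filter.Tendsto (fun n : ℕ => (n:ℝ) + 1 + c) Filter.atTop Filter.atTop := by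
    apply Filter.tendsto_atTop_add_const_right
    apply Filter.tendsto_atTop_add_const_right
    exact tendsto_natCast_atTop_atTop
  simpa only [one_div, Pi.inv_def] using h.inv_tendsto_atTop

lemma lem_summable_pair (b c Cb Cc : ℝ) (hCb : 1 ≤ Cb)
    (hbdb : ∀ n : ℕ, |1 / ((n:ℝ) + 1 + b)| ≤ Cb / ((n:ℝ) + 1))
    (hCc : 1 ≤ Cc) (hbdc : ∀ n : ℕ, |1 / ((n:ℝ) + 1 + c)| ≤ Cc / ((n:ℝ) + 1)) :
    Summable (fun j : ℕ => 1 / (((j:ℝ) + 1 + b) * ((j:ℝ) + 1 + c))) := by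
  apply Summable.of_norm
  apply Summable.of_nonneg_of_le (fun n => norm_nonneg _) (fun j => ?_)
    ((lem_base2.mul_left (Cb * Cc)))
  have h1 : ‖1 / (((j:ℝ) + 1 + b) * ((j:ℝ) + 1 + c))‖
      = |1 / ((j:ℝ) + 1 + b)| * |1 / ((j:ℝ) + 1 + c)| := by
    rw [← abs_mul]; congr 1; rw [div_mul_div_comm, one_mul]
  rw [h1]
  have h2 := hbdb j
  have h3 := hbdc j
  have hj : (0:ℝ) < (j:ℝ) + 1 := by positivity
  calc |1 / ((j:ℝ) + 1 + b)| * |1 / ((j:ℝ) + 1 + c)| ≤ (Cb / ((j:ℝ)+1)) * (Cc / ((j:ℝ)+1)) := by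
        apply mul_le_mul h2 h3 (abs_nonneg _) (by positivity)
    _ = Cb * Cc * (1 / ((j:ℝ) + 1) ^ 2) := by field_simp

lemma one_div_sub (X : ℝ) (hX : X ≠ 0) (hY : X + 1 ≠ 0) :
    1 / X - 1 / (X + 1) = 1 / (X * (X + 1)) := by
  field_simp
  ring

lemma lem_inner (b c : ℝ)
    (hbne : ∀ n : ℕ, ((n:ℝ) + 1 + b) ≠ 0) (hcne : ∀ n : ℕ, ((n:ℝ) + 1 + c) ≠ 0)
    (Cb Cc : ℝ) (hCb : 1 ≤ Cb) (hbdb : ∀ n : ℕ, |1 / ((n:ℝ) + 1 + b)| ≤ Cb / ((n:ℝ) + 1))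
    (hCc : 1 ≤ Cc) (hbdc : ∀ n : ℕ, |1 / ((n:ℝ) + 1 + c)| ≤ Cc / ((n:ℝ) + 1)) (i : ℕ) :
    HasSum (fun j : ℕ => 1 / ((j:ℝ) + 1 + b) - 1 / ((j:ℝ) + 1 + ((i:ℝ) + 1) + c))
      ((∑ k ∈ Icc 1 (i + 1), 1 / ((k:ℝ) + c))
        + (c - b) * ∑' j : ℕ, 1 / (((j:ℝ) + 1 + b) * ((j:ℝ) + 1 + c))) := by
  -- part 1 : (c-b)/((j+1+b)(j+1+c))
  have hpair := lem_summable_pair b c Cb Cc hCb hbdb hCc hbdc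
  have h1 : HasSum (fun j : ℕ => (c - b) * (1 / (((j:ℝ) + 1 + b) * ((j:ℝ) + 1 + c))))
      ((c - b) * ∑' j : ℕ, 1 / (((j:ℝ) + 1 + b) * ((j:ℝ) + 1 + c))) :=
    hpair.hasSum.mul_left _
  -- part 2 : telescoping pieces
  have htel : ∀ r : ℕ, HasSum
      (fun j : ℕ => 1 / (((j + r : ℕ):ℝ) + 1 + c) - 1 / (((j + r + 1 : ℕ):ℝ) + 1 + c))
      (1 / ((r:ℝ) + 1 + c)) := by
    intro r
    have := lem_telescope (fun j : ℕ => 1 / (((j + r : ℕ):ℝ) + 1 + c)) ?_ ?_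
    · have h0 : ((0 + r : ℕ):ℝ) = (r:ℝ) := by push_cast; ring
      rw [h0] at this
      refine this.congr_fun fun j => ?_
      congr 3
      push_cast; ring
    · have h : Filter.Tendsto (fun j : ℕ => j + r) Filter.atTop Filter.atTop :=
        Filter.tendsto_add_atTop_nat r
      exact (lem_tendsto_zero c).comp h
    · apply Summable.of_norm
      apply Summable.of_nonneg_of_le (fun n => norm_nonneg _) (fun j => ?_)
        ((lem_base2.mul_left (Cc * Cc)))
      have hX := hcne (j + r)
      have hY : (((j + r : ℕ):ℝ) + 1 + c) + 1 ≠ 0 := by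
        intro h; apply hcne (j + r + 1); push_cast at h ⊢; linarith
      have e1 : ((j + 1 + r : ℕ):ℝ) + 1 + c = (((j + r : ℕ):ℝ) + 1 + c) + 1 := by
        push_cast; ring
      have e2 : ((j + r + 1 : ℕ):ℝ) + 1 + c = (((j + r : ℕ):ℝ) + 1 + c) + 1 := by
        push_cast; ring
      have heq : 1 / (((j + r : ℕ):ℝ) + 1 + c) - 1 / (((j + 1 + r : ℕ):ℝ) + 1 + c)
          = 1 / ((((j + r : ℕ):ℝ) + 1 + c) * ((((j + r + 1 : ℕ):ℝ)) + 1 + c)) := by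
        rw [e1, e2, one_div_sub _ hX hY]
      rw [heq]
      have hb1 : |1 / ((((j + r):ℕ):ℝ) + 1 + c)| ≤ Cc / ((j:ℝ) + 1) := by
        refine le_trans (hbdc (j + r)) ?_
        apply div_le_div_of_nonneg_left (by linarith) (by positivity)
        push_cast; linarith [Nat.cast_nonneg (α := ℝ) r]
      have hb2 : |1 / ((((j + r + 1):ℕ):ℝ) + 1 + c)| ≤ Cc / ((j:ℝ) + 1) := by
        refine le_trans (hbdc (j + r + 1)) ?_
        apply div_le_div_of_nonneg_left (by linarith) (by positivity)
        push_cast; linarith [Nat.cast_nonneg (α := ℝ) r]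
      have habs : ‖1 / ((((j + r : ℕ):ℝ) + 1 + c) * ((((j + r + 1 : ℕ):ℝ)) + 1 + c))‖
          = |1 / ((((j + r):ℕ):ℝ) + 1 + c)| * |1 / ((((j + r + 1):ℕ):ℝ) + 1 + c)| := by
        rw [← abs_mul]; congr 1; rw [div_mul_div_comm, one_mul]
      rw [habs]
      calc |1 / ((((j + r):ℕ):ℝ) + 1 + c)| * |1 / ((((j + r + 1):ℕ):ℝ) + 1 + c)|
          ≤ (Cc / ((j:ℝ)+1)) * (Cc / ((j:ℝ)+1)) :=
            mul_le_mul hb1 hb2 (abs_nonneg _) (by positivity)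
        _ = Cc * Cc * (1 / ((j:ℝ) + 1) ^ 2) := by rw [div_mul_div_comm, ← sq]; ring
  have h2 : HasSum
      (fun j : ℕ => ∑ r ∈ range (i + 1),
        (1 / (((j + r : ℕ):ℝ) + 1 + c) - 1 / (((j + r + 1 : ℕ):ℝ) + 1 + c)))
      (∑ r ∈ range (i + 1), 1 / ((r:ℝ) + 1 + c)) :=
    hasSum_sum fun r _ => htel r
  -- identify the finite sum with the Icc sum
  have hIcc : ∑ r ∈ range (i + 1), 1 / ((r:ℝ) + 1 + c) = ∑ k ∈ Icc 1 (i + 1), 1 / ((k:ℝ) + c) := by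
    rw [← Finset.Ico_add_one_right_eq_Icc, Finset.sum_Ico_eq_sum_range]
    refine Finset.sum_congr (by norm_num) fun r _ => ?_
    push_cast; ring_nf
  rw [hIcc] at h2
  -- combine
  have h3 := h2.add h1
  refine h3.congr_fun fun j => ?_
  have hb0 := hbne j
  have hc0 := hcne j
  -- telescoped inner sum equals difference
  have key : ∀ N : ℕ, ∑ r ∈ range N,
      (1 / (((j + r : ℕ):ℝ) + 1 + c) - 1 / (((j + r + 1 : ℕ):ℝ) + 1 + c))
      = 1 / ((j:ℝ) + 1 + c) - 1 / (((j + N : ℕ):ℝ) + 1 + c) := by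
    intro N
    induction N with
    | zero => simp
    | succ k ih =>
      rw [Finset.sum_range_succ, ih]
      push_cast
      ring
  have htele : ∑ r ∈ range (i + 1),
      (1 / (((j + r : ℕ):ℝ) + 1 + c) - 1 / (((j + r + 1 : ℕ):ℝ) + 1 + c))
      = 1 / ((j:ℝ) + 1 + c) - 1 / ((j:ℝ) + 1 + ((i:ℝ) + 1) + c) := by
    rw [key (i + 1)]
    congr 2
    push_cast; ring
  rw [htele]
  have hsplit : 1 / ((j:ℝ) + 1 + b) - 1 / ((j:ℝ) + 1 + c)
      = (c - b) * (1 / (((j:ℝ) + 1 + b) * ((j:ℝ) + 1 + c))) := by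
    field_simp
    ring
  ring_nf
  ring_nf at hsplit
  linarith

lemma lem_pf (x y : ℝ) (hx : x ≠ 0) (hy : y ≠ 0) (hu : x + y ≠ 0) :
    ∀ m : ℕ, ∀ p : ℕ,
    1 / (x ^ (m + 1) * y ^ p * (x + y)) =
      (∑ t ∈ range m, (-1:ℝ) ^ t / (x ^ (m + 1 - t) * y ^ (p + t + 1)))
        + (-1:ℝ) ^ m / (x * y ^ (m + p) * (x + y)) := by
  intro m
  induction m with
  | zero => intro p; norm_num
  | succ m ih =>
    intro p
    have key : 1 / (x ^ (m + 2) * y ^ p * (x + y))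
        = 1 / (x ^ (m + 2) * y ^ (p + 1)) - 1 / (x ^ (m + 1) * y ^ (p + 1) * (x + y)) := by
      have hxp : x ^ (m + 2) ≠ 0 := pow_ne_zero _ hx
      have hxp1 : x ^ (m + 1) ≠ 0 := pow_ne_zero _ hx
      have hyp : y ^ (p + 1) ≠ 0 := pow_ne_zero _ hy
      field_simp
      ring
    rw [show m + 1 + 1 = m + 2 from rfl, key, ih (p + 1), Finset.sum_range_succ']
    have hsum : ∑ t ∈ range m, (-1:ℝ) ^ (t + 1) / (x ^ (m + 2 - (t + 1)) * y ^ (p + (t + 1) + 1))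
        = ∑ t ∈ range m, -((-1:ℝ) ^ t / (x ^ (m + 1 - t) * y ^ (p + 1 + t + 1))) := by
      refine Finset.sum_congr rfl fun t ht => ?_
      have he : m + 2 - (t + 1) = m + 1 - t := by omega
      have he2 : p + (t + 1) + 1 = p + 1 + t + 1 := by omega
      rw [he, he2, pow_succ]
      ring
    rw [hsum, Finset.sum_neg_distrib]
    simp only [Nat.sub_zero, pow_zero]
    have he3 : m + 1 + p = m + (p + 1) := by omega
    rw [he3]
    ring

lemma lem_pow_bound' (a C : ℝ) (hC : 1 ≤ C)
    (hbd : ∀ n : ℕ, |1 / ((n:ℝ) + 1 + a)| ≤ C / ((n:ℝ) + 1))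
    {e u : ℕ} (he : 1 ≤ e) (hu : e ≤ u) (i : ℕ) :
    |1 / ((i:ℝ) + 1 + a) ^ u| ≤ C ^ u / ((i:ℝ) + 1) ^ e := by
  have hi1 : (1:ℝ) ≤ (i:ℝ) + 1 := by nlinarith [Nat.cast_nonneg (α := ℝ) i]
  have h1 : |1 / ((i:ℝ) + 1 + a) ^ u| = |1 / ((i:ℝ) + 1 + a)| ^ u := by
    rw [← abs_pow]; ring_nf
  rw [h1]
  calc |1 / ((i:ℝ) + 1 + a)| ^ u ≤ (C / ((i:ℝ) + 1)) ^ u :=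
        pow_le_pow_left₀ (abs_nonneg _) (hbd i) u
    _ = C ^ u / ((i:ℝ) + 1) ^ u := by rw [div_pow]
    _ ≤ C ^ u / ((i:ℝ) + 1) ^ e := by
        apply div_le_div_of_nonneg_left (by positivity) (by positivity)
        exact pow_le_pow_right₀ hi1 hu

lemma lem_prod_tsum (α β Cα Cβ : ℝ) (hCα : 1 ≤ Cα)
    (hbdα : ∀ n : ℕ, |1 / ((n:ℝ) + 1 + α)| ≤ Cα / ((n:ℝ) + 1))
    (hCβ : 1 ≤ Cβ) (hbdβ : ∀ n : ℕ, |1 / ((n:ℝ) + 1 + β)| ≤ Cβ / ((n:ℝ) + 1))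
    {u v : ℕ} (hu : 2 ≤ u) (hv : 2 ≤ v) :
    ∑' z : ℕ × ℕ, 1 / (((z.1:ℝ) + 1 + α) ^ u * ((z.2:ℝ) + 1 + β) ^ v)
      = hzeta u α * hzeta v β := by
  have hfa : Summable fun n : ℕ => ‖1 / ((n:ℝ) + 1 + α) ^ u‖ := by
    exact (lem_summable_pow α Cα hCα hbdα hu).abs.congr fun n => (Real.norm_eq_abs _).symm
  have hfb : Summable fun n : ℕ => ‖1 / ((n:ℝ) + 1 + β) ^ v‖ := by
    exact (lem_summable_pow β Cβ hCβ hbdβ hv).abs.congr fun n => (Real.norm_eq_abs _).symm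
  have h := tsum_mul_tsum_of_summable_norm hfa hfb
  rw [hzeta, hzeta]
  rw [h]
  exact tsum_congr fun z => by rw [div_mul_div_comm, one_mul]


lemma lem_sum_bound (α β γ : ℝ) (hγ : γ = α + β)
    (Cγ : ℝ) (hCγ : 1 ≤ Cγ)
    (hbdγ : ∀ n : ℕ, |1 / ((n:ℝ) + 1 + γ)| ≤ Cγ / ((n:ℝ) + 1)) (i j : ℕ) :
    |1 / (((i:ℝ) + 1 + α) + ((j:ℝ) + 1 + β))| ≤ Cγ / ((j:ℝ) + 1) := by
  have hcast : ((i:ℝ) + 1 + α) + ((j:ℝ) + 1 + β) = (((i + j + 1 : ℕ):ℝ) + 1 + γ) := by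
    push_cast; rw [hγ]; ring
  rw [hcast]
  refine le_trans (hbdγ (i + j + 1)) ?_
  apply div_le_div_of_nonneg_left (by linarith) (by positivity)
  push_cast
  linarith [Nat.cast_nonneg (α := ℝ) i]

lemma lem_summable_T (α β γ : ℝ) (hγ : γ = α + β)
    (Cα Cβ Cγ : ℝ) (hCα : 1 ≤ Cα) (hCβ : 1 ≤ Cβ) (hCγ : 1 ≤ Cγ)
    (hbdα : ∀ n : ℕ, |1 / ((n:ℝ) + 1 + α)| ≤ Cα / ((n:ℝ) + 1))
    (hbdβ : ∀ n : ℕ, |1 / ((n:ℝ) + 1 + β)| ≤ Cβ / ((n:ℝ) + 1))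
    (hbdγ : ∀ n : ℕ, |1 / ((n:ℝ) + 1 + γ)| ≤ Cγ / ((n:ℝ) + 1))
    {u v : ℕ} (hu : 2 ≤ u) (hv : 1 ≤ v) :
    Summable (fun z : ℕ × ℕ => 1 / (((z.1:ℝ) + 1 + α) ^ u * (((z.2:ℝ) + 1 + β) ^ v *
      (((z.1:ℝ) + 1 + α) + ((z.2:ℝ) + 1 + β))))) := by
  apply lem_summable_of_le_prod (Cα ^ u * (Cβ ^ v * Cγ))
  rintro ⟨i, j⟩
  have hT1' : |1 / ((i:ℝ) + 1 + α) ^ u| ≤ Cα ^ u / ((i:ℝ) + 1) ^ 2 :=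
    lem_pow_bound' α Cα hCα hbdα (by norm_num) hu i
  have hT2 : |1 / ((j:ℝ) + 1 + β) ^ v| ≤ Cβ ^ v / ((j:ℝ) + 1) ^ 1 :=
    lem_pow_bound' β Cβ hCβ hbdβ (le_refl 1) hv j
  rw [pow_one] at hT2
  have hT3 := lem_sum_bound α β γ hγ Cγ hCγ hbdγ i j
  have h1 : |1 / (((i:ℝ) + 1 + α) ^ u * (((j:ℝ) + 1 + β) ^ v *
      (((i:ℝ) + 1 + α) + ((j:ℝ) + 1 + β))))|
      = |1 / ((i:ℝ) + 1 + α) ^ u| * (|1 / ((j:ℝ) + 1 + β) ^ v| *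
        |1 / (((i:ℝ) + 1 + α) + ((j:ℝ) + 1 + β))|) := by
    rw [← abs_mul, ← abs_mul]
    congr 1
    rw [div_mul_div_comm, div_mul_div_comm]
    norm_num
  rw [h1]
  have hα0 : (0:ℝ) ≤ Cα := by linarith
  have hβ0 : (0:ℝ) ≤ Cβ := by linarith
  have hγ0 : (0:ℝ) ≤ Cγ := by linarith
  calc |1 / ((i:ℝ) + 1 + α) ^ u| * (|1 / ((j:ℝ) + 1 + β) ^ v| *
        |1 / (((i:ℝ) + 1 + α) + ((j:ℝ) + 1 + β))|)
      ≤ (Cα ^ u / ((i:ℝ) + 1) ^ 2) * ((Cβ ^ v / ((j:ℝ) + 1)) * (Cγ / ((j:ℝ) + 1))) := by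
        apply mul_le_mul hT1' (mul_le_mul hT2 hT3 (abs_nonneg _) (by positivity))
          (by positivity) (by positivity)
    _ = Cα ^ u * (Cβ ^ v * Cγ) * (1 / ((i:ℝ) + 1) ^ 2 * (1 / ((j:ℝ) + 1) ^ 2)) := by
        rw [sq ((j:ℝ) + 1)]
        field_simp

lemma lem_hh_bound (γ Cγ : ℝ) (hCγ : 1 ≤ Cγ)
    (hbdγ : ∀ n : ℕ, |1 / ((n:ℝ) + 1 + γ)| ≤ Cγ / ((n:ℝ) + 1)) (n : ℕ) :
    |∑ k ∈ Icc 1 n, 1 / ((k:ℝ) + γ)| ≤ Cγ * n := by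
  refine le_trans (Finset.abs_sum_le_sum_abs _ _) ?_
  have h : ∀ k ∈ Icc 1 n, |1 / ((k:ℝ) + γ)| ≤ Cγ := by
    intro k hk
    obtain ⟨hk1, hk2⟩ := Finset.mem_Icc.mp hk
    obtain ⟨k', rfl⟩ : ∃ k', k = k' + 1 := ⟨k - 1, by omega⟩
    have hc : ((k' + 1 : ℕ):ℝ) + γ = (k':ℝ) + 1 + γ := by push_cast; ring
    rw [hc]
    exact lem_lin_bound γ Cγ hCγ hbdγ k'
  refine le_trans (Finset.sum_le_sum h) ?_
  rw [Finset.sum_const, Nat.card_Icc, nsmul_eq_mul]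
  simp only [Nat.add_sub_cancel]
  rw [mul_comm]

lemma lem_summable_A (α γ Cα Cγ : ℝ) (hCα : 1 ≤ Cα) (hCγ : 1 ≤ Cγ)
    (hbdα : ∀ n : ℕ, |1 / ((n:ℝ) + 1 + α)| ≤ Cα / ((n:ℝ) + 1))
    (hbdγ : ∀ n : ℕ, |1 / ((n:ℝ) + 1 + γ)| ≤ Cγ / ((n:ℝ) + 1))
    {s : ℕ} (hs : 3 ≤ s) :
    Summable (fun n : ℕ =>
      (1 / ((n:ℝ) + 1 + α) ^ s) * ∑ k ∈ Icc 1 (n + 1), 1 / ((k:ℝ) + γ)) := by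
  apply Summable.of_norm
  apply Summable.of_nonneg_of_le (fun n => norm_nonneg _) (fun n => ?_)
    (lem_base2.mul_left (Cα ^ s * Cγ))
  have h1 : ‖(1 / ((n:ℝ) + 1 + α) ^ s) * ∑ k ∈ Icc 1 (n + 1), 1 / ((k:ℝ) + γ)‖
      = |1 / ((n:ℝ) + 1 + α) ^ s| * |∑ k ∈ Icc 1 (n + 1), 1 / ((k:ℝ) + γ)| := abs_mul _ _
  rw [h1]
  have hT1 : |1 / ((n:ℝ) + 1 + α) ^ s| ≤ Cα ^ s / ((n:ℝ) + 1) ^ 3 :=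
    lem_pow_bound' α Cα hCα hbdα (by norm_num) hs n
  have hT2 : |∑ k ∈ Icc 1 (n + 1), 1 / ((k:ℝ) + γ)| ≤ Cγ * ((n:ℝ) + 1) := by
    have := lem_hh_bound γ Cγ hCγ hbdγ (n + 1)
    push_cast at this
    exact this
  calc |1 / ((n:ℝ) + 1 + α) ^ s| * |∑ k ∈ Icc 1 (n + 1), 1 / ((k:ℝ) + γ)|
      ≤ (Cα ^ s / ((n:ℝ) + 1) ^ 3) * (Cγ * ((n:ℝ) + 1)) :=
        mul_le_mul hT1 hT2 (abs_nonneg _) (by positivity)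
    _ = Cα ^ s * Cγ * (1 / ((n:ℝ) + 1) ^ 2) := by
        have h3 : ((n:ℝ) + 1) ^ 3 = ((n:ℝ) + 1) ^ 2 * ((n:ℝ) + 1) := by ring
        rw [h3]
        field_simp

lemma lem_U (α β : ℝ)
    (hαne : ∀ n : ℕ, ((n:ℝ) + 1 + α) ≠ 0) (hβne : ∀ n : ℕ, ((n:ℝ) + 1 + β) ≠ 0)
    (hγne : ∀ n : ℕ, ((n:ℝ) + 1 + (α + β)) ≠ 0)
    (Cα Cβ Cγ : ℝ) (hCα : 1 ≤ Cα) (hCβ : 1 ≤ Cβ) (hCγ : 1 ≤ Cγ)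
    (hbdα : ∀ n : ℕ, |1 / ((n:ℝ) + 1 + α)| ≤ Cα / ((n:ℝ) + 1))
    (hbdβ : ∀ n : ℕ, |1 / ((n:ℝ) + 1 + β)| ≤ Cβ / ((n:ℝ) + 1))
    (hbdγ : ∀ n : ℕ, |1 / ((n:ℝ) + 1 + (α + β))| ≤ Cγ / ((n:ℝ) + 1))
    {s : ℕ} (hs : 4 ≤ s) :
    ∑' z : ℕ × ℕ, 1 / (((z.1:ℝ) + 1 + α) ^ (s - 1) * ((((z.2:ℝ) + 1 + β)) *
        (((z.1:ℝ) + 1 + α) + ((z.2:ℝ) + 1 + β))))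
      = (∑' n : ℕ, (1 / ((n:ℝ) + 1 + α) ^ s) * ∑ k ∈ Icc 1 (n + 1), 1 / ((k:ℝ) + (α + β)))
        + α * (∑' j : ℕ, 1 / (((j:ℝ) + 1 + β) * ((j:ℝ) + 1 + (α + β)))) * hzeta s α := by
  have hs2 : 2 ≤ s := by omega
  have hs3 : 3 ≤ s := by omega
  have hsm1 : 2 ≤ s - 1 := by omega
  have hwhole : Summable (fun z : ℕ × ℕ => 1 / (((z.1:ℝ) + 1 + α) ^ (s - 1) *
      ((((z.2:ℝ) + 1 + β)) * (((z.1:ℝ) + 1 + α) + ((z.2:ℝ) + 1 + β))))) := by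
    have := lem_summable_T α β (α + β) rfl Cα Cβ Cγ hCα hCβ hCγ hbdα hbdβ hbdγ
      (u := s - 1) (v := 1) hsm1 le_rfl
    simpa [pow_one] using this
  rw [Summable.tsum_prod hwhole]
  have hinnerval : ∀ i : ℕ,
      (∑' j : ℕ, 1 / (((i:ℝ) + 1 + α) ^ (s - 1) * ((((j:ℝ) + 1 + β)) *
        (((i:ℝ) + 1 + α) + ((j:ℝ) + 1 + β)))))
      = (1 / ((i:ℝ) + 1 + α) ^ s) * ((∑ k ∈ Icc 1 (i + 1), 1 / ((k:ℝ) + (α + β)))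
          + α * ∑' j : ℕ, 1 / (((j:ℝ) + 1 + β) * ((j:ℝ) + 1 + (α + β)))) := by
    intro i
    have hinner := lem_inner β (α + β) hβne hγne Cβ Cγ hCβ hbdβ hCγ hbdγ i
    have e : (α + β - β) = α := by ring
    rw [e] at hinner
    have h2 := hinner.mul_left (1 / ((i:ℝ) + 1 + α) ^ s)
    have hpt : ∀ j : ℕ,
        1 / (((i:ℝ) + 1 + α) ^ (s - 1) * ((((j:ℝ) + 1 + β)) *
          (((i:ℝ) + 1 + α) + ((j:ℝ) + 1 + β))))
        = (1 / ((i:ℝ) + 1 + α) ^ s) *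
            (1 / ((j:ℝ) + 1 + β) - 1 / ((j:ℝ) + 1 + ((i:ℝ) + 1) + (α + β))) := by
      intro j
      have hX := hαne i
      have hY := hβne j
      have hXY : ((i:ℝ) + 1 + α) + ((j:ℝ) + 1 + β) ≠ 0 := by
        intro h
        apply hγne (i + j + 1)
        push_cast
        linarith
      have hXYe : (j:ℝ) + 1 + ((i:ℝ) + 1) + (α + β)
          = ((i:ℝ) + 1 + α) + ((j:ℝ) + 1 + β) := by ring
      rw [hXYe]
      have hpow : ((i:ℝ) + 1 + α) ^ s = ((i:ℝ) + 1 + α) ^ (s - 1) * ((i:ℝ) + 1 + α) := by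
        rw [← pow_succ]
        congr 1
        omega
      rw [hpow]
      have hXp : ((i:ℝ) + 1 + α) ^ (s - 1) ≠ 0 := pow_ne_zero _ hX
      field_simp
      ring
    exact ((h2.congr_fun hpt).tsum_eq)
  rw [tsum_congr hinnerval]
  have hsplit : ∀ i : ℕ, (1 / ((i:ℝ) + 1 + α) ^ s) * ((∑ k ∈ Icc 1 (i + 1), 1 / ((k:ℝ) + (α + β)))
          + α * ∑' j : ℕ, 1 / (((j:ℝ) + 1 + β) * ((j:ℝ) + 1 + (α + β))))
      = (1 / ((i:ℝ) + 1 + α) ^ s) * (∑ k ∈ Icc 1 (i + 1), 1 / ((k:ℝ) + (α + β)))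
        + (1 / ((i:ℝ) + 1 + α) ^ s) *
            (α * ∑' j : ℕ, 1 / (((j:ℝ) + 1 + β) * ((j:ℝ) + 1 + (α + β)))) := fun i => by ring
  rw [tsum_congr hsplit]
  have hA := lem_summable_A α (α + β) Cα Cγ hCα hCγ hbdα hbdγ hs3
  have hB := (lem_summable_pow α Cα hCα hbdα hs2).mul_right
    (α * ∑' j : ℕ, 1 / (((j:ℝ) + 1 + β) * ((j:ℝ) + 1 + (α + β))))
  rw [Summable.tsum_add hA hB, tsum_mul_right]
  rw [hzeta]
  ring

lemma lem_summable_F (α β : ℝ)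
    (Cα Cβ : ℝ) (hCα : 1 ≤ Cα) (hCβ : 1 ≤ Cβ)
    (hbdα : ∀ n : ℕ, |1 / ((n:ℝ) + 1 + α)| ≤ Cα / ((n:ℝ) + 1))
    (hbdβ : ∀ n : ℕ, |1 / ((n:ℝ) + 1 + β)| ≤ Cβ / ((n:ℝ) + 1))
    {u v : ℕ} (hu : 2 ≤ u) (hv : 2 ≤ v) :
    Summable (fun z : ℕ × ℕ => 1 / (((z.1:ℝ) + 1 + α) ^ u * ((z.2:ℝ) + 1 + β) ^ v)) := by
  apply lem_summable_of_le_prod (Cα ^ u * Cβ ^ v)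
  rintro ⟨i, j⟩
  have hT1 : |1 / ((i:ℝ) + 1 + α) ^ u| ≤ Cα ^ u / ((i:ℝ) + 1) ^ 2 :=
    lem_pow_bound' α Cα hCα hbdα (by norm_num) hu i
  have hT2 : |1 / ((j:ℝ) + 1 + β) ^ v| ≤ Cβ ^ v / ((j:ℝ) + 1) ^ 2 :=
    lem_pow_bound' β Cβ hCβ hbdβ (by norm_num) hv j
  have h1 : |1 / (((i:ℝ) + 1 + α) ^ u * ((j:ℝ) + 1 + β) ^ v)|
      = |1 / ((i:ℝ) + 1 + α) ^ u| * |1 / ((j:ℝ) + 1 + β) ^ v| := by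
    rw [← abs_mul, div_mul_div_comm, one_mul]
  rw [h1]
  calc |1 / ((i:ℝ) + 1 + α) ^ u| * |1 / ((j:ℝ) + 1 + β) ^ v|
      ≤ (Cα ^ u / ((i:ℝ) + 1) ^ 2) * (Cβ ^ v / ((j:ℝ) + 1) ^ 2) :=
        mul_le_mul hT1 hT2 (abs_nonneg _) (by positivity)
    _ = Cα ^ u * Cβ ^ v * (1 / ((i:ℝ) + 1) ^ 2 * (1 / ((j:ℝ) + 1) ^ 2)) := by
        field_simp

lemma lem_T (α β : ℝ)
    (hαne : ∀ n : ℕ, ((n:ℝ) + 1 + α) ≠ 0) (hβne : ∀ n : ℕ, ((n:ℝ) + 1 + β) ≠ 0)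
    (hγne : ∀ n : ℕ, ((n:ℝ) + 1 + (α + β)) ≠ 0)
    (Cα Cβ Cγ : ℝ) (hCα : 1 ≤ Cα) (hCβ : 1 ≤ Cβ) (hCγ : 1 ≤ Cγ)
    (hbdα : ∀ n : ℕ, |1 / ((n:ℝ) + 1 + α)| ≤ Cα / ((n:ℝ) + 1))
    (hbdβ : ∀ n : ℕ, |1 / ((n:ℝ) + 1 + β)| ≤ Cβ / ((n:ℝ) + 1))
    (hbdγ : ∀ n : ℕ, |1 / ((n:ℝ) + 1 + (α + β))| ≤ Cγ / ((n:ℝ) + 1))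
    {m p : ℕ} (hm : 2 ≤ m) (hp : 2 ≤ p) :
    ∑' z : ℕ × ℕ, 1 / (((z.1:ℝ) + 1 + α) ^ m * (((z.2:ℝ) + 1 + β) ^ p *
        (((z.1:ℝ) + 1 + α) + ((z.2:ℝ) + 1 + β))))
      = (∑ k ∈ Icc 1 (m - 1), (-1:ℝ) ^ (k - 1) * hzeta (m + 1 - k) α * hzeta (p + k) β)
        + (-1:ℝ) ^ (m - 1) * ∑' z : ℕ × ℕ, 1 / (((z.1:ℝ) + 1 + α) *
            (((z.2:ℝ) + 1 + β) ^ (m + p - 1) *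
              (((z.1:ℝ) + 1 + α) + ((z.2:ℝ) + 1 + β)))) := by
  have hG : Summable (fun z : ℕ × ℕ => 1 / (((z.1:ℝ) + 1 + α) *
      (((z.2:ℝ) + 1 + β) ^ (m + p - 1) *
        (((z.1:ℝ) + 1 + α) + ((z.2:ℝ) + 1 + β))))) := by
    have h := (lem_summable_T β α (β + α) rfl Cβ Cα Cγ hCβ hCα hCγ hbdβ hbdα
      (fun n => by rw [show β + α = α + β from by ring]; exact hbdγ n)
      (u := m + p - 1) (v := 1) (by omega) le_rfl).prod_symm
    refine h.congr fun z => ?_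
    simp only [Prod.fst_swap, Prod.snd_swap, pow_one]
    congr 1
    ring
  -- pointwise partial fraction
  have hpt : ∀ z : ℕ × ℕ, 1 / (((z.1:ℝ) + 1 + α) ^ m * (((z.2:ℝ) + 1 + β) ^ p *
        (((z.1:ℝ) + 1 + α) + ((z.2:ℝ) + 1 + β))))
      = (∑ t ∈ range (m - 1), (-1:ℝ) ^ t *
          (1 / (((z.1:ℝ) + 1 + α) ^ (m - t) * ((z.2:ℝ) + 1 + β) ^ (p + t + 1))))
        + (-1:ℝ) ^ (m - 1) * (1 / (((z.1:ℝ) + 1 + α) *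
            (((z.2:ℝ) + 1 + β) ^ (m + p - 1) *
              (((z.1:ℝ) + 1 + α) + ((z.2:ℝ) + 1 + β))))) := by
    rintro ⟨i, j⟩
    have hx := hαne i
    have hy := hβne j
    have hxy : ((i:ℝ) + 1 + α) + ((j:ℝ) + 1 + β) ≠ 0 := by
      intro h
      apply hγne (i + j + 1)
      push_cast
      linarith
    have h := lem_pf ((i:ℝ) + 1 + α) ((j:ℝ) + 1 + β) hx hy hxy (m - 1) p
    have hm1 : m - 1 + 1 = m := by omega
    rw [hm1] at h
    have hmp : m - 1 + p = m + p - 1 := by omega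
    rw [hmp] at h
    calc 1 / (((i:ℝ) + 1 + α) ^ m * (((j:ℝ) + 1 + β) ^ p *
          (((i:ℝ) + 1 + α) + ((j:ℝ) + 1 + β))))
        = 1 / (((i:ℝ) + 1 + α) ^ m * ((j:ℝ) + 1 + β) ^ p *
          (((i:ℝ) + 1 + α) + ((j:ℝ) + 1 + β))) := by rw [mul_assoc]
      _ = _ := by
          rw [h]
          congr 1
          · refine Finset.sum_congr rfl fun t ht => ?_
            rw [mul_one_div]
          · rw [mul_one_div, mul_assoc]
  rw [tsum_congr hpt]
  -- summability of each finite-sum piece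
  have hFsummable : ∀ t ∈ range (m - 1), Summable (fun z : ℕ × ℕ => (-1:ℝ) ^ t *
      (1 / (((z.1:ℝ) + 1 + α) ^ (m - t) * ((z.2:ℝ) + 1 + β) ^ (p + t + 1)))) := by
    intro t ht
    have h1 := Finset.mem_range.mp ht
    exact (lem_summable_F α β Cα Cβ hCα hCβ hbdα hbdβ (u := m - t) (v := p + t + 1)
      (by omega) (by omega)).mul_left _
  have hFsum : Summable (fun z : ℕ × ℕ => ∑ t ∈ range (m - 1), (-1:ℝ) ^ t *
      (1 / (((z.1:ℝ) + 1 + α) ^ (m - t) * ((z.2:ℝ) + 1 + β) ^ (p + t + 1)))) :=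
    summable_sum hFsummable
  rw [Summable.tsum_add hFsum (hG.mul_left _), Summable.tsum_finsetSum hFsummable, tsum_mul_left]
  congr 1
  have hterm : ∀ t ∈ range (m - 1),
      (∑' z : ℕ × ℕ, (-1:ℝ) ^ t * (1 / (((z.1:ℝ) + 1 + α) ^ (m - t) * ((z.2:ℝ) + 1 + β) ^ (p + t + 1))))
      = (-1:ℝ) ^ t * (hzeta (m - t) α * hzeta (p + t + 1) β) := by
    intro t ht
    have h1 := Finset.mem_range.mp ht
    rw [tsum_mul_left,
      lem_prod_tsum α β Cα Cβ hCα hbdα hCβ hbdβ (u := m - t) (v := p + t + 1) (by omega) (by omega)]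
  rw [Finset.sum_congr rfl hterm, ← Finset.Ico_add_one_right_eq_Icc, Finset.sum_Ico_eq_sum_range]
  refine Finset.sum_congr (by norm_num) fun t ht => ?_
  have e1 : m + 1 - (1 + t) = m - t := by omega
  have e2 : p + (1 + t) = p + t + 1 := by omega
  have e3 : (1 + t) - 1 = t := by omega
  rw [e1, e2, e3, mul_assoc]

theorem stmt19 (m p : ℕ) (hm : 2 ≤ m) (hp : 2 ≤ p) (a b : ℝ)
    (ha : ∀ k : ℕ, a ≠ -((k : ℝ) + 1)) (hb : ∀ k : ℕ, b ≠ -((k : ℝ) + 1))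
    (hab : ∀ k : ℕ, a + b ≠ -((k : ℝ) + 1)) :
    ∑' n : ℕ,
        ((-1 : ℝ) ^ (p - 1) / ((n + 1 : ℝ) + a) ^ (m + p)
            - (-1 : ℝ) ^ (m - 1) / ((n + 1 : ℝ) + b) ^ (m + p)) *
          (∑ k ∈ Icc 1 (n + 1), 1 / ((k : ℝ) + a + b)) =
      (∑ k ∈ Icc 1 (m - 1), (-1 : ℝ) ^ (k - 1) * hzeta (m + 1 - k) a * hzeta (p + k) b)
        - (∑ k ∈ Icc 1 (p - 1), (-1 : ℝ) ^ (k - 1) * hzeta (p + 1 - k) b * hzeta (m + k) a)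
        + b * (-1 : ℝ) ^ (m - 1) * hzeta (m + p) b *
            (∑' n : ℕ, 1 / (((n + 1 : ℝ) + a) * ((n + 1 : ℝ) + a + b)))
        - a * (-1 : ℝ) ^ (p - 1) * hzeta (m + p) a *
            (∑' n : ℕ, 1 / (((n + 1 : ℝ) + b) * ((n + 1 : ℝ) + a + b))) := by
  -- nonvanishing
  have hane := lem_ne a ha
  have hbne := lem_ne b hb
  have habne := lem_ne (a + b) hab
  have hba : b + a = a + b := add_comm b a
  have hbane : ∀ n : ℕ, ((n:ℝ) + 1 + (b + a)) ≠ 0 := fun n => by rw [hba]; exact habne n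
  -- bounds
  obtain ⟨Ca, hCa, hbda⟩ := lem_bound a ha
  obtain ⟨Cb, hCb, hbdb⟩ := lem_bound b hb
  obtain ⟨Cc, hCc, hbdc⟩ := lem_bound (a + b) hab
  have hbdc' : ∀ n : ℕ, |1 / ((n:ℝ) + 1 + (b + a))| ≤ Cc / ((n:ℝ) + 1) := fun n => by
    rw [hba]; exact hbdc n
  have hs4 : 4 ≤ m + p := by omega
  -- Step W : U-evaluation with (a, b)
  have hW := lem_U a b hane hbne habne Ca Cb Cc hCa hCb hCc hbda hbdb hbdc hs4
  -- Step V' : U-evaluation with (b, a)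
  have hV := lem_U b a hbne hane hbane Cb Ca Cc hCb hCa hCc hbdb hbda hbdc' hs4
  rw [hba] at hV
  -- Step T1 : T-decomposition with (a, b, m, p)
  have hT1 := lem_T a b hane hbne habne Ca Cb Cc hCa hCb hCc hbda hbdb hbdc hm hp
  -- Step T2 : T-decomposition with (b, a, p, m)
  have hT2 := lem_T b a hbne hane hbane Cb Ca Cc hCb hCa hCc hbdb hbda hbdc' hp hm
  rw [show p + m - 1 = m + p - 1 from by omega] at hT2
  -- swap identities
  have hswap1 : ∑' z : ℕ × ℕ, 1 / (((z.1:ℝ) + 1 + b) ^ p * (((z.2:ℝ) + 1 + a) ^ m *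
        (((z.1:ℝ) + 1 + b) + ((z.2:ℝ) + 1 + a))))
      = ∑' z : ℕ × ℕ, 1 / (((z.1:ℝ) + 1 + a) ^ m * (((z.2:ℝ) + 1 + b) ^ p *
        (((z.1:ℝ) + 1 + a) + ((z.2:ℝ) + 1 + b)))) := by
    rw [← Equiv.tsum_eq (Equiv.prodComm ℕ ℕ)
      (fun z : ℕ × ℕ => 1 / (((z.1:ℝ) + 1 + a) ^ m * (((z.2:ℝ) + 1 + b) ^ p *
        (((z.1:ℝ) + 1 + a) + ((z.2:ℝ) + 1 + b)))))]
    refine tsum_congr fun z => ?_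
    simp only [Equiv.prodComm_apply, Prod.fst_swap, Prod.snd_swap]
    congr 1
    ring
  rw [hswap1] at hT2
  have hswap2 : ∑' z : ℕ × ℕ, 1 / (((z.1:ℝ) + 1 + b) * (((z.2:ℝ) + 1 + a) ^ (m + p - 1) *
        (((z.1:ℝ) + 1 + b) + ((z.2:ℝ) + 1 + a))))
      = ∑' z : ℕ × ℕ, 1 / (((z.1:ℝ) + 1 + a) ^ (m + p - 1) * (((z.2:ℝ) + 1 + b) *
        (((z.1:ℝ) + 1 + a) + ((z.2:ℝ) + 1 + b)))) := by
    rw [← Equiv.tsum_eq (Equiv.prodComm ℕ ℕ)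
      (fun z : ℕ × ℕ => 1 / (((z.1:ℝ) + 1 + a) ^ (m + p - 1) * (((z.2:ℝ) + 1 + b) *
        (((z.1:ℝ) + 1 + a) + ((z.2:ℝ) + 1 + b)))))]
    refine tsum_congr fun z => ?_
    simp only [Equiv.prodComm_apply, Prod.fst_swap, Prod.snd_swap]
    congr 1
    ring
  rw [hswap2] at hT2
  have hswap3 : ∑' z : ℕ × ℕ, 1 / (((z.1:ℝ) + 1 + b) ^ (m + p - 1) * (((z.2:ℝ) + 1 + a) *
        (((z.1:ℝ) + 1 + b) + ((z.2:ℝ) + 1 + a))))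
      = ∑' z : ℕ × ℕ, 1 / (((z.1:ℝ) + 1 + a) * (((z.2:ℝ) + 1 + b) ^ (m + p - 1) *
        (((z.1:ℝ) + 1 + a) + ((z.2:ℝ) + 1 + b)))) := by
    rw [← Equiv.tsum_eq (Equiv.prodComm ℕ ℕ)
      (fun z : ℕ × ℕ => 1 / (((z.1:ℝ) + 1 + a) * (((z.2:ℝ) + 1 + b) ^ (m + p - 1) *
        (((z.1:ℝ) + 1 + a) + ((z.2:ℝ) + 1 + b)))))]
    refine tsum_congr fun z => ?_
    simp only [Equiv.prodComm_apply, Prod.fst_swap, Prod.snd_swap]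
    congr 1
    ring
  rw [hswap3] at hV
  -- LHS decomposition
  have hsplitA := (lem_summable_A a (a + b) Ca Cc hCa hCc hbda hbdc (s := m + p) (by omega)).mul_left
    ((-1:ℝ) ^ (p - 1))
  have hsplitB := (lem_summable_A b (a + b) Cb Cc hCb hCc hbdb hbdc (s := m + p) (by omega)).mul_left
    ((-1:ℝ) ^ (m - 1))
  have hLHS : ∑' n : ℕ,
        ((-1 : ℝ) ^ (p - 1) / ((n + 1 : ℝ) + a) ^ (m + p)
            - (-1 : ℝ) ^ (m - 1) / ((n + 1 : ℝ) + b) ^ (m + p)) *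
          (∑ k ∈ Icc 1 (n + 1), 1 / ((k : ℝ) + a + b))
      = (-1 : ℝ) ^ (p - 1) * (∑' n : ℕ, (1 / ((n:ℝ) + 1 + a) ^ (m + p)) *
            ∑ k ∈ Icc 1 (n + 1), 1 / ((k:ℝ) + (a + b)))
        - (-1 : ℝ) ^ (m - 1) * (∑' n : ℕ, (1 / ((n:ℝ) + 1 + b) ^ (m + p)) *
            ∑ k ∈ Icc 1 (n + 1), 1 / ((k:ℝ) + (a + b))) := by
    rw [← tsum_mul_left, ← tsum_mul_left, ← Summable.tsum_sub hsplitA hsplitB]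
    refine tsum_congr fun n => ?_
    have hh : ∑ k ∈ Icc 1 (n + 1), 1 / ((k : ℝ) + a + b)
        = ∑ k ∈ Icc 1 (n + 1), 1 / ((k:ℝ) + (a + b)) :=
      Finset.sum_congr rfl fun k _ => by rw [add_assoc]
    rw [hh]
    ring
  rw [hLHS]
  -- goal-side tsum normalizations
  have hCAeq : ∑' n : ℕ, 1 / (((n + 1 : ℝ) + a) * ((n + 1 : ℝ) + a + b))
      = ∑' n : ℕ, 1 / (((n:ℝ) + 1 + a) * ((n:ℝ) + 1 + (a + b))) :=
    tsum_congr fun n => by rw [add_assoc ((n:ℝ) + 1) a b]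
  have hCBeq : ∑' n : ℕ, 1 / (((n + 1 : ℝ) + b) * ((n + 1 : ℝ) + a + b))
      = ∑' n : ℕ, 1 / (((n:ℝ) + 1 + b) * ((n:ℝ) + 1 + (a + b))) := by
    refine tsum_congr fun n => ?_
    have : (n + 1 : ℝ) + a + b = (n:ℝ) + 1 + (a + b) := by ring
    rw [this]
  rw [hCAeq, hCBeq]
  linear_combination hT1 - hT2 - (-1 : ℝ) ^ (p - 1) * hW + (-1 : ℝ) ^ (m - 1) * hV
end
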